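/- arXiv:2407.02619 — 7 statements merged into one kernel-verified Lean document; each statement's English description precedes it below -/
import Mathlib

section
/- The composition of two signed seminorms is a signed seminorm: given signed seminorms ||·||_1 and ||·||_2 on V, the map v ↦ ||v||_1 if |||v||_1| ≥ |||v||_2|, and ||v||_2 otherwise, is again a signed seminorm on V. -/
/-! For an odd `f : V → ℝ`, the min-max inequality `min (f v) (f w) ≤ f (v + w) ≤ max (f v) (f w)`
amounts to the ultrametric inequality `|f (v + w)| ≤ max |f v| |f w|` together with
`f (v + w) = f v` whenever `|f w| < |f v|` or `f w = f v`. Both properties pass from `N₁`, `N₂`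
to the selection of the value of larger absolute value (ties going to `N₁`), whose absolute value
is `max |N₁| |N₂|`; homogeneity passes because `N₁` and `N₂` scale by the same factor. -/

noncomputable section

variable {K : Type*} [Field K] [LinearOrder K] [IsStrictOrderedRing K] {V : Type*} [AddCommGroup V] [Module K V]

/-- The sign of an element of a linear ordered field, as a real number. -/
def sgn (x : K) : ℝ := if 0 < x then 1 else if x < 0 then -1 else 0

/-- `av` is a non-Archimedean absolute value. -/
def IsNonarch (av : AbsoluteValue K ℝ) : Prop := ∀ x y : K, av (x + y) ≤ max (av x) (av y)

/-- `av` is compatible with the order on `K`: `0 ≤ a ≤ b` implies `av a ≤ av b`. -/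
def Compat (av : AbsoluteValue K ℝ) : Prop := ∀ x y : K, 0 ≤ x → x ≤ y → av x ≤ av y

/-- `K` is real closed. -/
def IsRealClosed' (K : Type*) [Field K] [LinearOrder K] [IsStrictOrderedRing K] : Prop :=
  (∀ x : K, 0 ≤ x → ∃ y, y * y = x) ∧
  ∀ p : Polynomial K, Odd p.natDegree → ∃ x, p.eval x = 0

/-- A signed seminorm on `V` with respect to the absolute value `av` on `K`. -/
def IsSignedSeminorm (av : AbsoluteValue K ℝ) (N : V → ℝ) : Prop :=
  (∀ (c : K) (v : V), N (c • v) = sgn c * av c * N v) ∧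
  (∀ v w : V, min (N v) (N w) ≤ N (v + w) ∧ N (v + w) ≤ max (N v) (N w))

def AddBetween (f : V → ℝ) : Prop :=
  ∀ v w : V, min (f v) (f w) ≤ f (v + w) ∧ f (v + w) ≤ max (f v) (f w)

namespace AddBetween

variable {f : V → ℝ}

theorem abs_map_add_le (hf : AddBetween f) (v w : V) : |f (v + w)| ≤ max |f v| |f w| :=
  (abs_le_max_abs_abs (hf v w).1 (hf v w).2).trans
    (max_le abs_min_le_max_abs_abs abs_max_le_max_abs_abs)

theorem map_add_of_eq (hf : AddBetween f) {v w : V} (h : f w = f v) : f (v + w) = f v := by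
  have hvw := hf v w
  rw [h, min_self, max_self] at hvw
  exact le_antisymm hvw.2 hvw.1

theorem map_add_of_abs_lt (hf : AddBetween f) (hodd : f.Odd) {v w : V} (h : |f w| < |f v|) :
    f (v + w) = f v := by
  have hvw := hf v w
  -- `v = (v + w) + (-w)`, so `f v` also lies between `f (v + w)` and `-f w`.
  have hv := hf (v + w) (-w)
  rw [add_neg_cancel_right, hodd] at hv
  rcases le_or_gt 0 (f v) with hpos | hneg
  · rw [abs_of_nonneg hpos, abs_lt] at h
    exact le_antisymm (hvw.2.trans_eq (max_eq_left h.2.le))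
      ((le_max_iff.mp hv.2).resolve_right (by linarith))
  · rw [abs_of_neg hneg, abs_lt] at h
    exact le_antisymm ((min_le_iff.mp hv.1).resolve_right (by linarith))
      ((min_eq_left (by linarith)).symm.trans_le hvw.1)

theorem map_add_of_abs_lt_or_eq (hf : AddBetween f) (hodd : f.Odd) {v w : V}
    (h : |f w| < |f v| ∨ f w = f v) : f (v + w) = f v :=
  h.elim (hf.map_add_of_abs_lt hodd) hf.map_add_of_eq

theorem of_map_add_eq (habs : ∀ v w, |f (v + w)| ≤ max |f v| |f w|)
    (hdom : ∀ v w, |f w| < |f v| ∨ f w = f v → f (v + w) = f v) : AddBetween f := by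
  intro v w
  rcases lt_trichotomy |f v| |f w| with hlt | heq | hgt
  · rw [add_comm, hdom w v (.inl hlt)]
    exact ⟨min_le_right _ _, le_max_right _ _⟩
  · by_cases hwv : f w = f v
    · rw [hdom v w (.inr hwv)]
      exact ⟨min_le_left _ _, le_max_left _ _⟩
    · rw [(abs_eq_abs.mp heq.symm).resolve_left hwv]
      obtain ⟨hlo, hhi⟩ := abs_le.mp ((habs v w).trans_eq (by rw [← heq, max_self]))
      rcases abs_choice (f v) with hv | hv <;> rw [hv] at hlo hhi
      · exact ⟨min_le_iff.mpr (.inr hlo), le_max_iff.mpr (.inl hhi)⟩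
      · exact ⟨min_le_iff.mpr (.inl (by rwa [neg_neg] at hlo)), le_max_iff.mpr (.inr hhi)⟩
  · rw [hdom v w (.inl hgt)]
    exact ⟨min_le_left _ _, le_max_left _ _⟩

end AddBetween

theorem IsSignedSeminorm.odd {av : AbsoluteValue K ℝ} {N : V → ℝ} (h : IsSignedSeminorm av N) :
    N.Odd := fun v => by
  rw [← neg_one_smul K v, h.1, av.map_neg, av.map_one, sgn, if_neg (by norm_num),
    if_pos (by norm_num)]
  ring

def maxByAbs {α : Type*} (f g : α → ℝ) (x : α) : ℝ := if |g x| ≤ |f x| then f x else g x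

section maxByAbs

variable {α : Type*} {f g : α → ℝ} {x : α} {a : ℝ}

theorem maxByAbs_eq_of_left (hfx : f x = a) (hgx : |g x| ≤ |a|) : maxByAbs f g x = a := by
  rw [maxByAbs, if_pos (hfx ▸ hgx), hfx]

theorem maxByAbs_eq_of_right (hgx : g x = a) (hfx : |f x| < |a|) : maxByAbs f g x = a := by
  rw [maxByAbs, if_neg (hgx ▸ hfx).not_ge, hgx]

theorem abs_maxByAbs (f g : α → ℝ) (x : α) : |maxByAbs f g x| = max |f x| |g x| := by
  unfold maxByAbs
  split_ifs with h
  · exact (max_eq_left h).symm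
  · exact (max_eq_right (le_of_not_ge h)).symm

theorem maxByAbs_eq_mul {y : α} {s : ℝ} (hf : f x = s * f y) (hg : g x = s * g y) :
    maxByAbs f g x = s * maxByAbs f g y := by
  unfold maxByAbs
  rcases eq_or_ne s 0 with rfl | hs
  · simp [hf, hg]
  · simp only [hf, hg, abs_mul, mul_le_mul_iff_right₀ (abs_pos.mpr hs)]
    split_ifs <;> rfl

end maxByAbs

namespace AddBetween

variable {f g : V → ℝ}

theorem abs_maxByAbs_add_le (hf : AddBetween f) (hg : AddBetween g) (v w : V) :
    |maxByAbs f g (v + w)| ≤ max |maxByAbs f g v| |maxByAbs f g w| := by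
  simp only [abs_maxByAbs]
  rw [max_max_max_comm]
  exact max_le_max (hf.abs_map_add_le v w) (hg.abs_map_add_le v w)

theorem maxByAbs_add_of_abs_lt_or_eq (hf : AddBetween f) (hg : AddBetween g) (hfo : f.Odd)
    (hgo : g.Odd) {v w : V}
    (h : |maxByAbs f g w| < |maxByAbs f g v| ∨ maxByAbs f g w = maxByAbs f g v) :
    maxByAbs f g (v + w) = maxByAbs f g v := by
  have hw : |maxByAbs f g w| ≤ |maxByAbs f g v| := h.elim le_of_lt fun e => e ▸ le_rfl
  rw [abs_maxByAbs f g w] at hw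
  obtain ⟨hfw, hgw⟩ := max_le_iff.mp hw
  rcases le_or_gt |g v| |f v| with hv | hv
  · rw [maxByAbs_eq_of_left rfl hv] at h hfw hgw ⊢
    have hf_add : f (v + w) = f v := by
      refine hf.map_add_of_abs_lt_or_eq hfo ?_
      rcases le_or_gt |g w| |f w| with hw | hw
      · rwa [maxByAbs_eq_of_left rfl hw] at h
      · exact .inl (hw.trans_le hgw)
    exact maxByAbs_eq_of_left hf_add ((hg.abs_map_add_le v w).trans (max_le hv hgw))
  · rw [maxByAbs_eq_of_right rfl hv] at h hfw hgw ⊢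
    rcases le_or_gt |g w| |f w| with hw | hw
    · rw [maxByAbs_eq_of_left rfl hw] at h
      rcases h with h | h
      · exact maxByAbs_eq_of_right (hg.map_add_of_abs_lt hgo (hw.trans_lt h))
          ((hf.abs_map_add_le v w).trans_lt (max_lt hv h))
      · have hf_add : f (v + w) = g v := by
          rw [add_comm, hf.map_add_of_abs_lt hfo (h ▸ hv), h]
        exact maxByAbs_eq_of_left hf_add ((hg.abs_map_add_le v w).trans (max_le le_rfl hgw))
    · rw [maxByAbs_eq_of_right rfl hw] at h
      exact maxByAbs_eq_of_right (hg.map_add_of_abs_lt_or_eq hgo h)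
        ((hf.abs_map_add_le v w).trans_lt (max_lt hv (hw.trans_le hgw)))

end AddBetween

theorem signedSeminorm_comp_general
    (av : AbsoluteValue K ℝ) (N₁ N₂ : V → ℝ)
    (h₁ : IsSignedSeminorm av N₁) (h₂ : IsSignedSeminorm av N₂) :
    IsSignedSeminorm av (fun v => if |N₂ v| ≤ |N₁ v| then N₁ v else N₂ v) :=
  ⟨fun c v => maxByAbs_eq_mul (h₁.1 c v) (h₂.1 c v),
    AddBetween.of_map_add_eq (AddBetween.abs_maxByAbs_add_le h₁.2 h₂.2)
      fun _ _ => AddBetween.maxByAbs_add_of_abs_lt_or_eq h₁.2 h₂.2 h₁.odd h₂.odd⟩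

/-- The composition of two signed seminorms is again a signed seminorm. -/
theorem signedSeminorm_comp
    (hK : IsRealClosed' K) (av : AbsoluteValue K ℝ) (hna : IsNonarch av) (hcomp : Compat av)
    [FiniteDimensional K V] (N₁ N₂ : V → ℝ)
    (h₁ : IsSignedSeminorm av N₁) (h₂ : IsSignedSeminorm av N₂) :
    IsSignedSeminorm av (fun v => if |N₂ v| ≤ |N₁ v| then N₁ v else N₂ v) :=
  signedSeminorm_comp_general av N₁ N₂ h₁ h₂
end
end

section
/- For any ordered basis B = (b_1,…,b_n) of V and parameters c_1 ≥ c_2 ≥ … ≥ c_n ≥ 0, the map sending v = Σ λ_i b_i to sgn(λ_j)|λ_j| c_j, where j is minimal with |λ_j| c_j = max_i |λ_i| c_i, is a signed seminorm on V. -/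
noncomputable section

variable {K : Type*} [Field K] [LinearOrder K] [IsStrictOrderedRing K] {V : Type*} [AddCommGroup V] [Module K V]

/-- `j` is the minimal index at which `av (lam j) * c j` attains its maximum. -/
def DiagAt {n : ℕ} (a : K → ℝ) (lam : Fin n → K) (c : Fin n → ℝ) (j : Fin n) : Prop :=
  (∀ i, a (lam i) * c i ≤ a (lam j) * c j) ∧
  (∀ i, i < j → a (lam i) * c i < a (lam j) * c j)

/-! Write `wᵢ(λ) = |λᵢ| cᵢ` and call the minimal maximiser `j` of `w(λ)` the leading index of `λ`.
Scaling by `t ≠ 0` multiplies every weight by `|t|`, so it keeps the leading index. For a sum,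
order `λ, μ` so that `(max w(λ), -j(λ))` is lexicographically at least `(max w(μ), -j(μ))`; then,
with `j = j(λ)`, every weight of `μ` is at most `wⱼ(λ)`, strictly so at indices below `j`.
Unless `μⱼ` has the weight of `λⱼ` and the opposite sign, the ultrametric inequality and the
compatibility of `|·|` with the order show that `λⱼ + μⱼ` keeps the weight and sign of `λⱼ`, so
`λ + μ` has the leading index and value of `λ`. In the remaining case the values at `λ` and `μ`
are `±M`, and the value at `λ + μ` has absolute value at most `M`. -/

omit [IsStrictOrderedRing K] in
lemma sgn_of_pos {x : K} (h : 0 < x) : sgn x = 1 := by simp [sgn, h]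

omit [IsStrictOrderedRing K] in
lemma sgn_of_neg {x : K} (h : x < 0) : sgn x = -1 := by simp [sgn, h, h.not_gt]

omit [IsStrictOrderedRing K] in
lemma sgn_nonpos {x : K} (h : x ≤ 0) : sgn x ≤ 0 := by
  unfold sgn
  split_ifs with hpos
  · exact absurd h hpos.not_ge
  all_goals norm_num

omit [IsStrictOrderedRing K] in
lemma sgn_eq_sign (x : K) : sgn x = SignType.sign x := by
  unfold sgn
  split_ifs with hpos hneg
  · simp [sign_pos hpos]
  · simp [sign_neg hneg]
  · simp [sign_eq_zero_iff.2 (le_antisymm (not_lt.1 hpos) (not_lt.1 hneg))]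

lemma sgn_mul (x y : K) : sgn (x * y) = sgn x * sgn y := by
  simp only [sgn_eq_sign, sign_mul, SignType.coe_mul]

lemma sgn_add_eq_left_of_mul_pos {x y : K} (h : 0 < x * y) : sgn (x + y) = sgn x := by
  rcases pos_and_pos_or_neg_and_neg_of_mul_pos h with ⟨hx, hy⟩ | ⟨hx, hy⟩
  · rw [sgn_of_pos hx, sgn_of_pos (add_pos hx hy)]
  · rw [sgn_of_neg hx, sgn_of_neg (add_neg hx hy)]

omit [IsStrictOrderedRing K] in
lemma abs_sgn_mul_mul (av : AbsoluteValue K ℝ) (x : K) {r : ℝ} (hr : 0 ≤ r) :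
    |sgn x * av x * r| = av x * r := by
  rcases lt_trichotomy x 0 with hx | rfl | hx
  · rw [sgn_of_neg hx, neg_one_mul, neg_mul, abs_neg, abs_of_nonneg (by positivity)]
  · simp
  · rw [sgn_of_pos hx, one_mul, abs_of_nonneg (by positivity)]

lemma mem_uIcc_of_mul_nonpos {a b z : ℝ} (hab : a * b ≤ 0) (ha : |z| ≤ |a|) (hb : |z| ≤ |b|) :
    z ∈ Set.uIcc a b := by
  wlog hle : a ≤ b generalizing a b
  · rw [Set.uIcc_comm]
    exact this (by rwa [mul_comm]) hb ha (le_of_not_ge hle)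
  have ha0 : a ≤ 0 := by nlinarith
  have hb0 : 0 ≤ b := by nlinarith
  rw [Set.uIcc_of_le hle]
  exact ⟨by linarith [neg_abs_le z, abs_of_nonpos ha0],
    by linarith [le_abs_self z, abs_of_nonneg hb0]⟩

section AbsoluteValue

variable {av : AbsoluteValue K ℝ}

lemma Compat.sgn_add_eq_left_of_lt (hcomp : Compat av) {x y : K} (h : av y < av x) :
    sgn (x + y) = sgn x := by
  rcases lt_trichotomy x 0 with hx | rfl | hx
  · have hxy : x + y < 0 := by
      by_contra! hxy
      exact h.not_ge (by simpa using hcomp (-x) y (by linarith) (by linarith))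
    rw [sgn_of_neg hx, sgn_of_neg hxy]
  · exact absurd h (by simp)
  · have hxy : 0 < x + y := by
      by_contra! hxy
      exact h.not_ge (by simpa using hcomp x (-y) hx.le (by linarith))
    rw [sgn_of_pos hx, sgn_of_pos hxy]

lemma IsNonarch.map_add_eq_max_of_mul_pos (hna : IsNonarch av) (hcomp : Compat av) {x y : K}
    (h : 0 < x * y) : av (x + y) = max (av x) (av y) := by
  wlog hx : 0 < x generalizing x y
  · have hx' : 0 < -x := neg_pos.2 ((not_lt.1 hx).lt_of_ne (left_ne_zero_of_mul h.ne'))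
    have := this (x := -x) (y := -y) (by rwa [neg_mul_neg]) hx'
    rwa [← neg_add, av.map_neg, av.map_neg, av.map_neg] at this
  have hy : 0 < y := (pos_iff_pos_of_mul_pos h).1 hx
  exact le_antisymm (hna x y)
    (max_le (hcomp x _ hx.le (by linarith)) (hcomp y _ hy.le (by linarith)))

omit [LinearOrder K] [IsStrictOrderedRing K] in
lemma IsNonarch.map_add_apply_mul_le_max (hna : IsNonarch av) {n : ℕ} {c : Fin n → ℝ}
    (hc : ∀ i, 0 ≤ c i) (lam mu : Fin n → K) (i : Fin n) :
    av ((lam + mu) i) * c i ≤ max (av (lam i) * c i) (av (mu i) * c i) := by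
  rw [Pi.add_apply, ← max_mul_of_nonneg _ _ (hc i)]
  exact mul_le_mul_of_nonneg_right (hna _ _) (hc i)

end AbsoluteValue

namespace DiagAt

variable {α : Type*} {n : ℕ} {a : α → ℝ} {lam : Fin n → α} {c : Fin n → ℝ} {j k : Fin n}

lemma unique (hj : DiagAt a lam c j) (hk : DiagAt a lam c k) : j = k :=
  le_antisymm (not_lt.1 fun h => (hj.2 k h).not_ge (hk.1 j))
    (not_lt.1 fun h => (hk.2 j h).not_ge (hj.1 k))

lemma exists_of_nonempty [Nonempty (Fin n)] (a : α → ℝ) (lam : Fin n → α) (c : Fin n → ℝ) :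
    ∃ j, DiagAt a lam c j := by
  obtain ⟨m, -, hm⟩ := Finset.univ.exists_max_image (fun i => a (lam i) * c i) Finset.univ_nonempty
  obtain ⟨j, hj, hmin⟩ := wellFounded_lt.has_min {j | ∀ i, a (lam i) * c i ≤ a (lam j) * c j}
    ⟨m, fun i => hm i (Finset.mem_univ i)⟩
  refine ⟨j, hj, fun i hi => ?_⟩
  by_contra! h
  exact hmin i (fun k => (hj k).trans h) hi

lemma le_and_lt_of_lex (hk : DiagAt a lam c k) {M : ℝ}
    (h : a (lam k) * c k < M ∨ a (lam k) * c k = M ∧ j ≤ k) :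
    (∀ i, a (lam i) * c i ≤ M) ∧ ∀ i < j, a (lam i) * c i < M := by
  rcases h with h | ⟨rfl, hjk⟩
  · exact ⟨fun i => (hk.1 i).trans h.le, fun i _ => (hk.1 i).trans_lt h⟩
  · exact ⟨hk.1, fun i hi => hk.2 i (hi.trans_le hjk)⟩

omit [LinearOrder K] [IsStrictOrderedRing K] in
lemma smul {av : AbsoluteValue K ℝ} {lam : Fin n → K} (h : DiagAt av lam c j) {t : K}
    (ht : t ≠ 0) : DiagAt av (t • lam) c j := by
  have hweight : ∀ i, av ((t • lam) i) * c i = av t * (av (lam i) * c i) := fun i => by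
    rw [Pi.smul_apply, smul_eq_mul, map_mul, mul_assoc]
  have hpos : 0 < av t := av.pos ht
  refine ⟨fun i => ?_, fun i hi => ?_⟩ <;> rw [hweight, hweight]
  · exact mul_le_mul_of_nonneg_left (h.1 i) hpos.le
  · exact mul_lt_mul_of_pos_left (h.2 i hi) hpos

omit [LinearOrder K] [IsStrictOrderedRing K] in
lemma add {av : AbsoluteValue K ℝ} (hna : IsNonarch av) (hc : ∀ i, 0 ≤ c i) {lam mu : Fin n → K}
    (hlam : DiagAt av lam c j) (hmu_le : ∀ i, av (mu i) * c i ≤ av (lam j) * c j)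
    (hmu_lt : ∀ i < j, av (mu i) * c i < av (lam j) * c j)
    (hj : av ((lam + mu) j) * c j = av (lam j) * c j) : DiagAt av (lam + mu) c j := by
  refine ⟨fun i => ?_, fun i hi => ?_⟩ <;> rw [hj]
  · exact (hna.map_add_apply_mul_le_max hc lam mu i).trans (max_le (hlam.1 i) (hmu_le i))
  · exact (hna.map_add_apply_mul_le_max hc lam mu i).trans_lt
      (max_lt (hlam.2 i hi) (hmu_lt i hi))

end DiagAt

open Classical in
def diagonalMap {n : ℕ} (av : AbsoluteValue K ℝ) (c : Fin n → ℝ) (lam : Fin n → K) : ℝ :=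
  if h : ∃ j, DiagAt av lam c j then sgn (lam h.choose) * av (lam h.choose) * c h.choose else 0

section diagonalMap

variable {n : ℕ} {av : AbsoluteValue K ℝ} {c : Fin n → ℝ}

omit [IsStrictOrderedRing K] in
lemma diagonalMap_eq {lam : Fin n → K} {j : Fin n} (h : DiagAt av lam c j) :
    diagonalMap av c lam = sgn (lam j) * av (lam j) * c j := by
  have hex : ∃ j, DiagAt av lam c j := ⟨j, h⟩
  rw [diagonalMap, dif_pos hex, hex.choose_spec.unique h]

omit [IsStrictOrderedRing K] in
lemma diagonalMap_of_isEmpty [IsEmpty (Fin n)] (lam : Fin n → K) : diagonalMap av c lam = 0 :=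
  dif_neg fun ⟨j, _⟩ => isEmptyElim j

omit [IsStrictOrderedRing K] in
lemma abs_diagonalMap (hc : ∀ i, 0 ≤ c i) {lam : Fin n → K} {j : Fin n} (h : DiagAt av lam c j) :
    |diagonalMap av c lam| = av (lam j) * c j := by
  rw [diagonalMap_eq h, abs_sgn_mul_mul av _ (hc j)]

lemma diagonalMap_smul (t : K) (lam : Fin n → K) :
    diagonalMap av c (t • lam) = sgn t * av t * diagonalMap av c lam := by
  rcases isEmpty_or_nonempty (Fin n) with _ | _
  · simp [diagonalMap_of_isEmpty]
  obtain ⟨j, hj⟩ := DiagAt.exists_of_nonempty av lam c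
  rcases eq_or_ne t 0 with rfl | ht
  · obtain ⟨k, hk⟩ := DiagAt.exists_of_nonempty av (0 : Fin n → K) c
    simp [diagonalMap_eq hk]
  · rw [diagonalMap_eq (hj.smul ht), diagonalMap_eq hj, Pi.smul_apply, smul_eq_mul, sgn_mul,
      map_mul]
    ring

omit [IsStrictOrderedRing K] in
lemma diagonalMap_add_eq_left (hna : IsNonarch av) (hc : ∀ i, 0 ≤ c i) {lam mu : Fin n → K}
    {j : Fin n} (hlam : DiagAt av lam c j) (hmu_le : ∀ i, av (mu i) * c i ≤ av (lam j) * c j)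
    (hmu_lt : ∀ i < j, av (mu i) * c i < av (lam j) * c j)
    (hweight : av ((lam + mu) j) * c j = av (lam j) * c j)
    (hsgn : sgn ((lam + mu) j) = sgn (lam j)) :
    diagonalMap av c (lam + mu) = diagonalMap av c lam := by
  rw [diagonalMap_eq (hlam.add hna hc hmu_le hmu_lt hweight), diagonalMap_eq hlam, mul_assoc,
    hweight, hsgn, mul_assoc]

lemma diagonalMap_add_mem_uIcc_of_dominated (hna : IsNonarch av) (hcomp : Compat av)
    (hc : ∀ i, 0 ≤ c i) {lam mu : Fin n → K} {j : Fin n} (hlam : DiagAt av lam c j)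
    (hmu_le : ∀ i, av (mu i) * c i ≤ av (lam j) * c j)
    (hmu_lt : ∀ i < j, av (mu i) * c i < av (lam j) * c j) :
    diagonalMap av c (lam + mu) ∈ Set.uIcc (diagonalMap av c lam) (diagonalMap av c mu) := by
  by_cases hdom : av (mu j) < av (lam j) ∨ 0 < lam j * mu j
  · have hsum : av ((lam + mu) j) = max (av (lam j)) (av (mu j)) ∧
        sgn ((lam + mu) j) = sgn (lam j) := by
      rcases hdom with h | h
      · exact ⟨by rw [Pi.add_apply, IsNonarchimedean.add_eq_left_of_lt hna h, max_eq_left h.le],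
          hcomp.sgn_add_eq_left_of_lt h⟩
      · exact ⟨hna.map_add_eq_max_of_mul_pos hcomp h, sgn_add_eq_left_of_mul_pos h⟩
    have hweight : av ((lam + mu) j) * c j = av (lam j) * c j := by
      rw [hsum.1, max_mul_of_nonneg _ _ (hc j), max_eq_left (hmu_le j)]
    rw [diagonalMap_add_eq_left hna hc hlam hmu_le hmu_lt hweight hsum.2]
    exact Set.left_mem_uIcc
  push Not at hdom
  have hmax : av (lam j) * c j ≤ av (mu j) * c j := mul_le_mul_of_nonneg_right hdom.1 (hc j)
  have hmu : DiagAt av mu c j :=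
    ⟨fun i => (hmu_le i).trans hmax, fun i hi => (hmu_lt i hi).trans_le hmax⟩
  have : Nonempty (Fin n) := ⟨j⟩
  obtain ⟨l, hl⟩ := DiagAt.exists_of_nonempty av (lam + mu) c
  have hsum : |diagonalMap av c (lam + mu)| ≤ av (lam j) * c j := by
    rw [abs_diagonalMap hc hl]
    exact (hna.map_add_apply_mul_le_max hc lam mu l).trans (max_le (hlam.1 l) (hmu_le l))
  refine mem_uIcc_of_mul_nonpos ?_ (by rwa [abs_diagonalMap hc hlam])
    (by rw [abs_diagonalMap hc hmu]; exact hsum.trans hmax)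
  rw [diagonalMap_eq hlam, diagonalMap_eq hmu]
  calc sgn (lam j) * av (lam j) * c j * (sgn (mu j) * av (mu j) * c j)
      = sgn (lam j * mu j) * ((av (lam j) * c j) * (av (mu j) * c j)) := by rw [sgn_mul]; ring
    _ ≤ 0 := mul_nonpos_of_nonpos_of_nonneg (sgn_nonpos hdom.2)
        (mul_nonneg (mul_nonneg (av.nonneg _) (hc j)) (mul_nonneg (av.nonneg _) (hc j)))

lemma diagonalMap_add_mem_uIcc (hna : IsNonarch av) (hcomp : Compat av) (hc : ∀ i, 0 ≤ c i)
    (lam mu : Fin n → K) :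
    diagonalMap av c (lam + mu) ∈ Set.uIcc (diagonalMap av c lam) (diagonalMap av c mu) := by
  rcases isEmpty_or_nonempty (Fin n) with _ | _
  · simp [diagonalMap_of_isEmpty]
  obtain ⟨j, hj⟩ := DiagAt.exists_of_nonempty av lam c
  obtain ⟨k, hk⟩ := DiagAt.exists_of_nonempty av mu c
  wlog hjk : av (mu k) * c k < av (lam j) * c j ∨ av (mu k) * c k = av (lam j) * c j ∧ j ≤ k
    generalizing lam mu j k
  · push Not at hjk
    have hkj : av (lam j) * c j < av (mu k) * c k ∨ av (lam j) * c j = av (mu k) * c k ∧ k ≤ j :=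
      hjk.1.lt_or_eq.imp id fun h => ⟨h, (hjk.2 h.symm).le⟩
    rw [add_comm, Set.uIcc_comm]
    exact this mu lam k hk j hj hkj
  obtain ⟨hmu_le, hmu_lt⟩ := hk.le_and_lt_of_lex hjk
  exact diagonalMap_add_mem_uIcc_of_dominated hna hcomp hc hj hmu_le hmu_lt

end diagonalMap

theorem diagonal_map_isSignedSeminorm_general {n : ℕ}
    (av : AbsoluteValue K ℝ) (hna : IsNonarch av) (hcomp : Compat av)
    (B : Module.Basis (Fin n) K V) (c : Fin n → ℝ) (hpos : ∀ i, 0 ≤ c i) :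
    ∃ N : V → ℝ, IsSignedSeminorm av N ∧
      ∀ (v : V) (j : Fin n), DiagAt (fun x => av x) (fun i => B.repr v i) c j →
        N v = sgn (B.repr v j) * av (B.repr v j) * c j := by
  refine ⟨fun v => diagonalMap av c (B.repr v), ⟨fun t v => ?_, fun v w => ?_⟩,
    fun v j hj => diagonalMap_eq hj⟩
  · simpa only [map_smul, Finsupp.coe_smul] using diagonalMap_smul t (B.repr v)
  · simpa only [map_add, Finsupp.coe_add] using
      Set.mem_Icc.1 (diagonalMap_add_mem_uIcc hna hcomp hpos (B.repr v) (B.repr w))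

/-- For an ordered basis `B` and parameters `c₁ ≥ … ≥ cₙ ≥ 0`, the map sending
`v = Σ λᵢ bᵢ` to `sgn(λⱼ)|λⱼ| cⱼ`, where `j` is minimal with `|λⱼ| cⱼ` maximal,
is a signed seminorm. -/
theorem diagonal_map_isSignedSeminorm {n : ℕ}
    (hK : IsRealClosed' K) (av : AbsoluteValue K ℝ) (hna : IsNonarch av) (hcomp : Compat av)
    (B : Module.Basis (Fin n) K V) (c : Fin n → ℝ) (hmono : Antitone c) (hpos : ∀ i, 0 ≤ c i) :
    ∃ N : V → ℝ, IsSignedSeminorm av N ∧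
      ∀ (v : V) (j : Fin n), DiagAt (fun x => av x) (fun i => B.repr v i) c j →
        N v = sgn (B.repr v j) * av (B.repr v j) * c j :=
  diagonal_map_isSignedSeminorm_general av hna hcomp B c hpos
end
end

section
/- A non-trivial signed seminorm over a trivially valued real closed field K has finite image in ℝ. -/
noncomputable section

variable {K : Type*} [Field K] [LinearOrder K] [IsStrictOrderedRing K] {V : Type*} [AddCommGroup V] [Module K V]

/-- The trivial absolute value. -/
def trivabs (x : K) : ℝ := if x = 0 then 0 else 1

/-- `K` is real closed. -/
def IsRealClosedField (K : Type*) [Field K] [LinearOrder K] [IsStrictOrderedRing K] : Prop :=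
  (∀ x : K, 0 ≤ x → ∃ y, y * y = x) ∧
  ∀ p : Polynomial K, Odd p.natDegree → ∃ x, p.eval x = 0

/-- A signed seminorm on `V` with respect to the trivial absolute value on `K`
(note `sgn c * trivabs c = sgn c`). -/
def IsSignedSeminormTriv (N : V → ℝ) : Prop :=
  (∀ (c : K) (v : V), N (c • v) = sgn c * N v) ∧
  (∀ v w : V, min (N v) (N w) ≤ N (v + w) ∧ N (v + w) ≤ max (N v) (N w))

/-!
The function `v ↦ |N v|` is ultrametric and does not grow under scaling, so its sublevel sets
`{v | |N v| ≤ a}` are subspaces, strictly increasing in the level `a` on the range of `|N|`.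
Their dimensions therefore separate the values of `|N|`, which are thus finitely many, and the
values of `N` are among these and their negatives.
-/

namespace UltrametricSublevel

variable {k E α : Type*} [DivisionRing k] [AddCommGroup E] [Module k E] [LinearOrder α]
  {f : E → α} (hadd : ∀ v w, f (v + w) ≤ max (f v) (f w)) (hsmul : ∀ (c : k) v, f (c • v) ≤ f v)

/-- Sublevel sets are taken only at attained levels, so that they contain `0`. -/
def sublevelSubmodule (a : Set.range f) : Submodule k E where
  carrier := {v | f v ≤ a}
  add_mem' hv hw := (hadd _ _).trans (max_le hv hw)
  zero_mem' := by
    obtain ⟨v, hv⟩ := a.2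
    simpa [hv] using hsmul 0 v
  smul_mem' c v hv := (hsmul c v).trans hv

include hadd hsmul in
theorem sublevelSubmodule_strictMono : StrictMono (sublevelSubmodule hadd hsmul) := by
  rintro a b hab
  obtain ⟨w, hw⟩ := b.2
  refine SetLike.lt_iff_le_and_exists.mpr ⟨fun v hv => le_trans hv hab.le, w, ?_, ?_⟩
  · exact hw.le
  · exact fun hwa : f w ≤ a => hab.not_ge (show (b : α) ≤ a from hw ▸ hwa)

include hadd hsmul in
theorem finite_range [FiniteDimensional k E] : (Set.range f).Finite := by
  have hmono : StrictMono fun a => Module.finrank k (sublevelSubmodule hadd hsmul a) :=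
    fun a b hab => Submodule.finrank_lt_finrank_of_lt (sublevelSubmodule_strictMono hadd hsmul hab)
  let dim : Set.range f → Fin (Module.finrank k E + 1) := fun a =>
    ⟨_, Nat.lt_succ_of_le (Submodule.finrank_le (sublevelSubmodule hadd hsmul a))⟩
  exact Set.finite_coe_iff.mp <|
    Finite.of_injective dim fun a b h => hmono.injective (congrArg Fin.val h)

end UltrametricSublevel

theorem Set.Finite.of_range_abs {ι : Type*} {g : ι → ℝ} (h : (Set.range fun i => |g i|).Finite) :
    (Set.range g).Finite := by
  refine (h.union (h.image Neg.neg)).subset ?_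
  rintro _ ⟨i, rfl⟩
  rcases abs_choice (g i) with hi | hi
  · exact Or.inl ⟨i, hi⟩
  · exact Or.inr ⟨|g i|, ⟨i, rfl⟩, by rw [hi, neg_neg]⟩

theorem abs_sgn_le_one {F : Type*} [Field F] [LinearOrder F] (c : F) : |sgn c| ≤ 1 := by
  unfold sgn
  split_ifs <;> norm_num

namespace IsSignedSeminormTriv

omit [IsStrictOrderedRing K]

variable {N : V → ℝ}

theorem abs_map_smul_le (hN : IsSignedSeminormTriv (K := K) N) (c : K) (v : V) :
    |N (c • v)| ≤ |N v| := by
  rw [hN.1 c v, abs_mul]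
  exact mul_le_of_le_one_left (abs_nonneg _) (abs_sgn_le_one c)

theorem abs_map_add_le_max (hN : IsSignedSeminormTriv (K := K) N) (v w : V) :
    |N (v + w)| ≤ max |N v| |N w| := by
  obtain ⟨hmin, hmax⟩ := hN.2 v w
  refine abs_le.mpr ⟨?_, hmax.trans (max_le_max (le_abs_self _) (le_abs_self _))⟩
  calc -max |N v| |N w| = min (-|N v|) (-|N w|) := (min_neg_neg _ _).symm
    _ ≤ min (N v) (N w) := min_le_min (neg_abs_le _) (neg_abs_le _)
    _ ≤ N (v + w) := hmin

end IsSignedSeminormTriv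

theorem signedSeminorm_finite_image_general
    [FiniteDimensional K V]
    (N : V → ℝ) (hN : IsSignedSeminormTriv (K := K) N) :
    (Set.range N).Finite :=
  Set.Finite.of_range_abs <|
    UltrametricSublevel.finite_range (k := K) hN.abs_map_add_le_max hN.abs_map_smul_le

/-- A non-trivial signed seminorm over a trivially valued real closed field
has finite image. -/
theorem signedSeminorm_finite_image
    (hK : IsRealClosedField K) [FiniteDimensional K V]
    (N : V → ℝ) (hN : IsSignedSeminormTriv (K := K) N) (hne : N ≠ 0) :
    (Set.range N).Finite :=
  signedSeminorm_finite_image_general N hN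
end
end

section
/- Every homothety class of signed seminorms on (K^{n+1})^* lies in the real tropical linear space of the universal realizable oriented valuated matroid: for any signed seminorm ||·||^sgn on (K^{n+1})^* and any tuple C = (f_0,…,f_{n+1}) of n+2 linear functionals, 0 lies in the ℝ𝕋-hypersum ⊕_{i=0}^{n+1} (−1)^i ||f_i||^sgn · φ_univ(C − f_i), where φ_univ(g_0,…,g_n) = sgn(det[g_0,…,g_n]) · |det[g_0,…,g_n]|_K. -/
noncomputable section

variable {K : Type*} [Field K] [LinearOrder K] [IsStrictOrderedRing K] {V : Type*} [AddCommGroup V] [Module K V]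

/-- Hyperaddition in the real tropical hyperfield `ℝ𝕋`. -/
def rtAdd (a b : ℝ) : Set ℝ :=
  if |b| < |a| then {a}
  else if |a| < |b| then {b}
  else if a = b then {a}
  else Set.Icc (min a b) (max a b)

/-- Iterated hypersum in `ℝ𝕋` over a list. -/
def rtSum : List ℝ → Set ℝ
  | [] => {0}
  | a :: l => ⋃ b ∈ rtSum l, rtAdd a b

/-- The universal Grassmann–Plücker function on `E = (K^{n+1})^*`. -/
def phiUniv {n : ℕ} (av : AbsoluteValue K ℝ) (g : Fin (n + 1) → Fin (n + 1) → K) : ℝ :=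
  sgn ((Matrix.of g).det) * av ((Matrix.of g).det)

/-!
Put `vᵢ = (-1)ⁱ det(C - fᵢ) • fᵢ`. Cramer's rule says `∑ vᵢ = 0`, and the `i`-th term of the
hypersum is `‖vᵢ‖`. For vectors summing to zero, the largest value `M` of `|‖vᵢ‖|` is attained
with both signs: the `vᵢ` of seminorm `-M` sum to a vector of seminorm `-M`, so the remaining
ones sum to a vector of seminorm `M`, and one of them has seminorm `M`. A hypersum in `ℝ𝕋` whose
terms of largest absolute value `M` include both `M` and `-M` contains `[-M, M]`, hence `0`.
-/

lemma sgn_neg (x : K) : sgn (-x) = -sgn x := by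
  simp only [sgn, neg_pos, neg_lt_zero]
  split_ifs <;> linarith

lemma sgn_neg_one_pow_mul (i : ℕ) (x : K) : sgn ((-1) ^ i * x) = (-1) ^ i * sgn x := by
  induction i with
  | zero => simp
  | succ i ih => rw [pow_succ, pow_succ, mul_right_comm, mul_neg_one, sgn_neg, ih]; ring

lemma Matrix.sum_neg_one_pow_mul_det_succAbove_smul {R : Type*} [CommRing R] {n : ℕ}
    (C : Fin (n + 2) → Fin (n + 1) → R) :
    ∑ i : Fin (n + 2), ((-1) ^ (i : ℕ) * (of fun j => C (i.succAbove j)).det) • C i = 0 := by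
  funext k
  -- expand along column `0` a matrix whose columns `0` and `k + 1` coincide
  have hexp : (of fun i => (Fin.cons (C i k) (C i) : Fin (n + 2) → R)).det =
      ∑ i : Fin (n + 2), (-1) ^ (i : ℕ) * C i k * (of fun j => C (i.succAbove j)).det :=
    det_succ_column_zero _
  rw [det_zero_of_column_eq (Fin.succ_ne_zero k).symm (fun i => rfl)] at hexp
  simp only [Finset.sum_apply, Pi.smul_apply, smul_eq_mul, Pi.zero_apply]
  exact (Finset.sum_congr rfl fun i _ => by ring).trans hexp.symm

lemma mem_rtAdd_left {a b : ℝ} (h : |b| ≤ |a|) : a ∈ rtAdd a b := by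
  unfold rtAdd
  split_ifs <;> simp_all; linarith

lemma mem_rtAdd_right {a b : ℝ} (h : |a| ≤ |b|) : b ∈ rtAdd a b := by
  unfold rtAdd
  split_ifs <;> simp_all; linarith

lemma mem_rtAdd_neg {a c : ℝ} (h : |c| ≤ |a|) : c ∈ rtAdd a (-a) := by
  unfold rtAdd
  rw [abs_neg]
  split_ifs with ha
  · exact absurd ha (lt_irrefl _)
  · obtain rfl : a = 0 := by linarith
    simpa using h
  · have := abs_le.1 h
    simp only [Set.mem_Icc, min_le_iff, le_max_iff]
    constructor <;> cases abs_choice a <;> simp_all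

lemma exists_mem_rtSum_abs_le {l : List ℝ} {M : ℝ} (hM : 0 ≤ M) (hl : ∀ x ∈ l, |x| ≤ M) :
    ∃ b ∈ rtSum l, |b| ≤ M := by
  induction l with
  | nil => exact ⟨0, rfl, by simpa using hM⟩
  | cons a l ih =>
    obtain ⟨b, hb, hbM⟩ := ih fun x hx => hl x (List.mem_cons_of_mem a hx)
    rcases le_total |b| |a| with hba | hab
    · exact ⟨a, Set.mem_biUnion hb (mem_rtAdd_left hba), hl a List.mem_cons_self⟩
    · exact ⟨b, Set.mem_biUnion hb (mem_rtAdd_right hab), hbM⟩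

lemma mem_rtSum_of_forall_abs_le {l : List ℝ} {y : ℝ} (hy : y ∈ l ∨ y = 0)
    (hl : ∀ x ∈ l, |x| ≤ |y|) : y ∈ rtSum l := by
  induction l with
  | nil => simpa [rtSum] using hy
  | cons a l ih =>
    have hl' : ∀ x ∈ l, |x| ≤ |y| := fun x hx => hl x (List.mem_cons_of_mem a hx)
    rcases hy with hy | rfl
    · rcases List.mem_cons.1 hy with rfl | hy
      · obtain ⟨b, hb, hby⟩ := exists_mem_rtSum_abs_le (abs_nonneg y) hl'
        exact Set.mem_biUnion hb (mem_rtAdd_left hby)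
      · exact Set.mem_biUnion (ih (.inl hy) hl') (mem_rtAdd_right (hl a List.mem_cons_self))
    · exact Set.mem_biUnion (ih (.inr rfl) hl') (mem_rtAdd_right (hl a List.mem_cons_self))

lemma mem_rtSum_of_abs_le {l : List ℝ} {y c : ℝ} (hy : y ∈ l) (hy' : -y ∈ l)
    (hl : ∀ x ∈ l, |x| ≤ |y|) (hc : |c| ≤ |y|) : c ∈ rtSum l := by
  induction l generalizing y c with
  | nil => simp at hy
  | cons a l ih =>
    have hl' : ∀ x ∈ l, |x| ≤ |y| := fun x hx => hl x (List.mem_cons_of_mem a hx)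
    have ha : |a| ≤ |y| := hl a List.mem_cons_self
    by_cases htail : y ∈ l ∧ -y ∈ l
    · rcases lt_or_ge |a| |c| with hac | hca
      · exact Set.mem_biUnion (ih htail.1 htail.2 hl' hc) (mem_rtAdd_right hac.le)
      · have : -a ∈ rtSum l := ih htail.1 htail.2 hl' ((abs_neg a).trans_le ha)
        exact Set.mem_biUnion this (mem_rtAdd_neg hca)
    · -- the head `a` is then `y` or `-y`, and `-a` occurs in the list as well
      obtain ⟨hna, hay⟩ : -a ∈ a :: l ∧ |a| = |y| := by
        rcases List.mem_cons.1 hy with rfl | hyl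
        · exact ⟨hy', rfl⟩
        · rcases List.mem_cons.1 hy' with h | h
          · subst h
            exact ⟨by simpa using hy, abs_neg y⟩
          · exact absurd ⟨hyl, h⟩ htail
      have : -a ∈ rtSum l := by
        refine mem_rtSum_of_forall_abs_le ?_ (by simpa [hay] using hl')
        rcases List.mem_cons.1 hna with h | h
        · exact .inr (by linarith)
        · exact .inl h
      exact Set.mem_biUnion this (mem_rtAdd_neg (hay ▸ hc))

namespace IsSignedSeminorm

section

variable {F W : Type*} [Field F] [LinearOrder F] [AddCommGroup W] [Module F W]
  {av : AbsoluteValue F ℝ} {N : W → ℝ}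

lemma map_zero (hN : IsSignedSeminorm av N) : N 0 = 0 := by
  simpa [sgn] using hN.1 0 0

lemma neg (hN : IsSignedSeminorm av N) : IsSignedSeminorm av fun v => -N v := by
  refine ⟨fun c v => by simp only [hN.1]; ring, fun v w => ?_⟩
  rw [min_neg_neg, max_neg_neg, neg_le_neg_iff, neg_le_neg_iff]
  exact (hN.2 v w).symm

lemma exists_map_sum_le (hN : IsSignedSeminorm av N) {ι : Type*} (v : ι → W) {s : Finset ι}
    (hs : s.Nonempty) : ∃ i ∈ s, N (∑ j ∈ s, v j) ≤ N (v i) := by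
  induction hs using Finset.Nonempty.cons_induction with
  | singleton i => exact ⟨i, Finset.mem_singleton_self i, by simp⟩
  | cons i s hi hs ih =>
    obtain ⟨j, hj, hle⟩ := ih
    rw [Finset.sum_cons]
    rcases le_total (N (v i)) (N (∑ k ∈ s, v k)) with h | h
    · exact ⟨j, Finset.mem_cons_of_mem hj, ((hN.2 _ _).2.trans (max_le h le_rfl)).trans hle⟩
    · exact ⟨i, Finset.mem_cons_self i s, (hN.2 _ _).2.trans (max_le le_rfl h)⟩

end

variable {av : AbsoluteValue K ℝ} {N : V → ℝ}

lemma map_neg (hN : IsSignedSeminorm av N) (v : V) : N (-v) = -N v := by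
  have := hN.1 (-1) v
  norm_num [sgn] at this
  exact this

lemma exists_map_eq_of_map_eq_neg (hN : IsSignedSeminorm av N) {ι : Type*} [Fintype ι]
    {v : ι → V} (hv : ∑ i, v i = 0) {M : ℝ} (hM : ∀ i, N (v i) ≤ M) {i₀ : ι}
    (hi₀ : N (v i₀) = -M) : ∃ j, N (v j) = M := by
  classical
  set S := Finset.univ.filter fun i => N (v i) = -M
  obtain ⟨i, hiS, hSle⟩ := hN.exists_map_sum_le v (s := S) ⟨i₀, by simpa [S] using hi₀⟩
  have hcompl : M ≤ N (∑ j ∈ Sᶜ, v j) := by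
    have hsplit : ∑ j ∈ Sᶜ, v j = -∑ j ∈ S, v j := by
      rw [eq_neg_iff_add_eq_zero, add_comm, Finset.sum_add_sum_compl, hv]
    rw [hsplit, hN.map_neg]
    linarith [(Finset.mem_filter.1 hiS).2]
  rcases Sᶜ.eq_empty_or_nonempty with hempty | hne
  · rw [hempty, Finset.sum_empty, hN.map_zero] at hcompl
    exact ⟨i₀, by linarith [hM i₀]⟩
  · obtain ⟨j, -, hj⟩ := hN.exists_map_sum_le v hne
    exact ⟨j, le_antisymm (hM j) (hcompl.trans hj)⟩

lemma exists_map_eq_and_map_eq_neg (hN : IsSignedSeminorm av N) {ι : Type*} [Fintype ι]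
    [Nonempty ι] {v : ι → V} (hv : ∑ i, v i = 0) :
    ∃ M, (∀ i, |N (v i)| ≤ M) ∧ (∃ i, N (v i) = M) ∧ ∃ j, N (v j) = -M := by
  obtain ⟨i₀, hmax⟩ := Finite.exists_max fun i => |N (v i)|
  refine ⟨_, hmax, ?_⟩
  have hle : ∀ i, N (v i) ≤ |N (v i₀)| := fun i => (le_abs_self _).trans (hmax i)
  have hge : ∀ i, -N (v i) ≤ |N (v i₀)| := fun i => (neg_le_abs _).trans (hmax i)
  rcases abs_choice (N (v i₀)) with h | h
  · obtain ⟨j, hj⟩ := hN.neg.exists_map_eq_of_map_eq_neg hv hge (i₀ := i₀) (by rw [h])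
    exact ⟨⟨i₀, h.symm⟩, j, by linarith⟩
  · exact ⟨hN.exists_map_eq_of_map_eq_neg hv hle (by rw [h, neg_neg]), i₀, by rw [h, neg_neg]⟩

end IsSignedSeminorm

theorem signedSeminorm_in_tropMuniv_general {n : ℕ}
    (av : AbsoluteValue K ℝ)
    (N : (Fin (n + 1) → K) → ℝ) (hN : IsSignedSeminorm av N)
    (C : Fin (n + 2) → Fin (n + 1) → K) :
    (0 : ℝ) ∈ rtSum (((List.finRange (n + 2)).map fun i : Fin (n + 2) =>
      ((-1 : ℝ) ^ (i : ℕ)) * N (C i) * phiUniv av (fun j => C (i.succAbove j)))) := by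
  set v : Fin (n + 2) → Fin (n + 1) → K :=
    fun i => ((-1) ^ (i : ℕ) * (Matrix.of fun j => C (i.succAbove j)).det) • C i
  have hterm : ∀ i : Fin (n + 2),
      (-1 : ℝ) ^ (i : ℕ) * N (C i) * phiUniv av (fun j => C (i.succAbove j)) = N (v i) := by
    intro i
    simp only [v, hN.1, sgn_neg_one_pow_mul, map_mul, map_pow, AbsoluteValue.map_neg,
      AbsoluteValue.map_one, one_pow, one_mul, phiUniv]
    ring
  obtain ⟨M, hle, ⟨i, hi⟩, j, hj⟩ :=
    hN.exists_map_eq_and_map_eq_neg (Matrix.sum_neg_one_pow_mul_det_succAbove_smul C)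
  simp only [hterm]
  have hM : |M| = M := abs_of_nonneg ((abs_nonneg _).trans (hle i))
  refine mem_rtSum_of_abs_le (y := M) ?_ ?_ ?_ (by simp)
  · exact List.mem_map.2 ⟨i, List.mem_finRange i, hi⟩
  · exact List.mem_map.2 ⟨j, List.mem_finRange j, hj⟩
  · simpa [hM] using hle

/-- Every signed seminorm lies in the real tropical linear space of the universal
realizable oriented valuated matroid: for every `(n+2)`-tuple `C` of functionals,
`0` lies in the hypersum `⊕ᵢ (-1)^i ‖fᵢ‖ · φ_univ(C - fᵢ)`. -/
theorem signedSeminorm_in_tropMuniv {n : ℕ}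
    (hK : IsRealClosed' K) (av : AbsoluteValue K ℝ) (hna : IsNonarch av) (hcomp : Compat av)
    (N : (Fin (n + 1) → K) → ℝ) (hN : IsSignedSeminorm av N)
    (C : Fin (n + 2) → Fin (n + 1) → K) :
    (0 : ℝ) ∈ rtSum (((List.finRange (n + 2)).map fun i : Fin (n + 2) =>
      ((-1 : ℝ) ^ (i : ℕ)) * N (C i) * phiUniv av (fun j => C (i.succAbove j)))) :=
  signedSeminorm_in_tropMuniv_general av N hN C
end
end

section
/- The map from signed seminorms to the lattice of flats given by X ↦ X^0 (the zero set of a covector of an oriented matroid of rank n) is well-defined (the zero set of any covector is a flat of the underlying matroid), surjective onto the flats, and strictly monotonic: if X < Y are covectors then X^0 ⊋ Y^0; consequently every chain of nonzero covectors has length at most n. -/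
noncomputable section

variable {E : Type*} [DecidableEq E] {n : ℕ}

/-- A chirotope of rank `n+1` on the ground set `E`: a nonzero alternating map
`(Fin (n+1) → E) → {0,±1}` satisfying the Grassmann–Plücker relations over the
sign hyperfield. -/
def IsChirotope (φ : (Fin (n + 1) → E) → ℝ) : Prop :=
  (∃ b, φ b ≠ 0) ∧
  (∀ b, φ b = 0 ∨ φ b = 1 ∨ φ b = -1) ∧
  (∀ (b : Fin (n + 1) → E) (σ : Equiv.Perm (Fin (n + 1))),
    φ (b ∘ σ) = ((Equiv.Perm.sign σ : ℤ) : ℝ) * φ b) ∧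
  (∀ (b : Fin (n + 1) → E) (i j : Fin (n + 1)), i ≠ j → b i = b j → φ b = 0) ∧
  (∀ (x : Fin (n + 2) → E) (y : Fin n → E),
    (∀ k : Fin (n + 2), ((-1 : ℝ) ^ (k : ℕ)) * φ (x ∘ k.succAbove) * φ (Fin.cons (x k) y) = 0) ∨
    (∃ k l : Fin (n + 2),
      0 < ((-1 : ℝ) ^ (k : ℕ)) * φ (x ∘ k.succAbove) * φ (Fin.cons (x k) y) ∧
      ((-1 : ℝ) ^ (l : ℕ)) * φ (x ∘ l.succAbove) * φ (Fin.cons (x l) y) < 0))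

/-- Composition of signed sets. -/
def scomp (X Y : E → ℝ) : E → ℝ := fun e => if X e ≠ 0 then X e else Y e

/-- A cocircuit of the oriented matroid with chirotope `φ`. -/
def IsCocircuit (φ : (Fin (n + 1) → E) → ℝ) (X : E → ℝ) : Prop :=
  X ≠ 0 ∧ ∃ (ε : ℝ) (μ : Fin n → E), (ε = 1 ∨ ε = -1) ∧ ∀ e, X e = ε * φ (Fin.cons e μ)

/-- Covectors: finite compositions of cocircuits (the empty composition is `0`). -/
inductive IsCovector (φ : (Fin (n + 1) → E) → ℝ) : (E → ℝ) → Prop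
  | zero : IsCovector φ 0
  | cocirc (X : E → ℝ) : IsCocircuit φ X → IsCovector φ X
  | comp (X Y : E → ℝ) : IsCocircuit φ X → IsCovector φ Y → IsCovector φ (scomp X Y)

/-- The partial order on signed sets: `X ≤ Y` iff `Y` agrees with `X` on the
support of `X`. -/
def sle (X Y : E → ℝ) : Prop := ∀ e, X e ≠ 0 → Y e = X e

/-- A finite set is independent iff it is contained in (the range of) a basis. -/
def Indep (φ : (Fin (n + 1) → E) → ℝ) (S : Finset E) : Prop :=
  ∃ b : Fin (n + 1) → E, φ b ≠ 0 ∧ (S : Set E) ⊆ Set.range b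

/-- Flats of the underlying matroid: sets closed under the closure operator. -/
def IsFlat (φ : (Fin (n + 1) → E) → ℝ) (F : Set E) : Prop :=
  ∀ e : E, (∃ S : Finset E, (S : Set E) ⊆ F ∧ Indep φ S ∧ ¬ Indep φ (insert e S)) → e ∈ F

/-! The tuples on which `φ` does not vanish are the bases of a matroid of rank `n + 1`, basis
exchange being an instance of the Grassmann–Plücker relations, and its flats are the sets
satisfying `IsFlat`. The zero set of the cocircuit `φ (Fin.cons · μ)` is the hyperplane spanned
by `μ`, so zero sets of covectors are intersections of hyperplanes, hence flats. Conversely, if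
`I` spans the flat `F` and `I ⊆ B` with `B` a base, then `F` is the intersection of the
hyperplanes spanned by `B \ {e}` for `e ∈ B \ I`, and composing the corresponding cocircuits
gives a covector with zero set `F`. If `X < Y` then `Y⁰ ⊊ X⁰`, and along a strictly decreasing
chain of flats starting from the ground set every step adds one element to an independent set,
which bounds the length of the chain by the rank. -/

open Set Function

lemma Function.Injective.range_comp_succAbove {β : Type*} {m : ℕ} {b : Fin (m + 1) → β}
    (hb : Injective b) (i : Fin (m + 1)) : range (b ∘ i.succAbove) = range b \ {b i} := by
  rw [range_comp, Fin.range_succAbove, compl_eq_univ_sdiff, image_sdiff hb, image_univ,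
    image_singleton]

lemma setOf_scomp_eq_zero {α : Type*} (X Y : α → ℝ) :
    {e | scomp X Y e = 0} = {e | X e = 0} ∩ {e | Y e = 0} := by
  ext e
  by_cases h : X e = 0 <;> simp [scomp, h]

lemma setOf_eq_zero_ssubset_of_sle {α : Type*} {X Y : α → ℝ} (hle : sle X Y) (hne : X ≠ Y) :
    {e | Y e = 0} ⊂ {e | X e = 0} := by
  refine ssubset_iff_subset_ne.2
    ⟨fun e (he : Y e = 0) => show X e = 0 from by_contra fun h => h ((hle e h).symm.trans he), ?_⟩
  intro heq
  refine hne (funext fun e => ?_)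
  by_cases h : X e = 0
  · rw [h, show Y e = 0 from heq.symm.subset h]
  · exact (hle e h).symm

lemma exists_isCovector_setOf_eq_zero_eq_biInter {α ι : Type*} {φ : (Fin (n + 1) → α) → ℝ}
    {s : Set ι} (hs : s.Finite) {Y : ι → α → ℝ} (hY : ∀ i ∈ s, IsCocircuit φ (Y i)) :
    ∃ X, IsCovector φ X ∧ {e | X e = 0} = ⋂ i ∈ s, {e | Y i e = 0} := by
  induction s, hs using Set.Finite.induction_on with
  | empty => exact ⟨0, .zero, by simp⟩
  | @insert i s _ _ ih =>
    obtain ⟨X, hX, hXzero⟩ := ih fun j hj => hY j (mem_insert_of_mem i hj)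
    refine ⟨scomp (Y i) X, .comp _ _ (hY i (mem_insert i s)) hX, ?_⟩
    rw [setOf_scomp_eq_zero, hXzero, biInter_insert]

namespace Matroid

variable {α : Type*} {M : Matroid α}

lemma IsFlat.inter {F G : Set α} (hF : M.IsFlat F) (hG : M.IsFlat G) : M.IsFlat (F ∩ G) := by
  rw [inter_eq_iInter]
  exact IsFlat.iInter (Bool.forall_bool.2 ⟨hG, hF⟩)

lemma IsBase.closure_eq_ground_inter_biInter {B I : Set α} (hB : M.IsBase B) (hIB : I ⊆ B) :
    M.closure I = M.E ∩ ⋂ e ∈ B \ I, M.closure (B \ {e}) := by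
  have hI : ⋂₀ insert B ((B \ {·}) '' (B \ I)) = I := by
    ext x
    simp only [sInter_insert, sInter_image, mem_inter_iff, mem_iInter, mem_sdiff,
      mem_singleton_iff]
    exact ⟨fun ⟨hxB, h⟩ => by_contra fun hxI => (h x ⟨hxB, hxI⟩).2 rfl,
      fun hxI => ⟨hIB hxI, fun e he => ⟨hIB hxI, fun hxe => he.2 (hxe ▸ hxI)⟩⟩⟩
  conv_lhs => rw [← hI]
  rw [hB.indep.closure_sInter_eq_biInter_closure_of_forall_subset (insert_nonempty _ _)]
  · rw [biInter_insert, biInter_image, hB.closure_eq]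
  · rintro _ (rfl | ⟨e, -, rfl⟩)
    exacts [subset_rfl, sdiff_subset]

lemma exists_indep_subset_encard_eq_length {F : Set α} {l : List (Set α)} (hF : F ⊆ M.E)
    (hl : ∀ G ∈ l, M.IsFlat G) (hchain : (F :: l).IsChain (· ⊃ ·)) :
    ∃ I ⊆ F, M.Indep I ∧ I.encard = l.length := by
  induction l generalizing F with
  | nil => exact ⟨∅, empty_subset _, M.empty_indep, by simp⟩
  | cons G t ih =>
    obtain ⟨hGF, htail⟩ := List.isChain_cons_cons.mp hchain
    have hG := hl G List.mem_cons_self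
    obtain ⟨I, hIG, hI, hIcard⟩ := ih hG.subset_ground (fun G' h => hl G' (.tail _ h)) htail
    obtain ⟨e, heF, heG⟩ := exists_of_ssubset hGF
    have heI : e ∉ M.closure I := fun h => heG (hG.closure ▸ M.closure_subset_closure hIG h)
    refine ⟨insert e I, insert_subset heF (hIG.trans hGF.subset), ?_, ?_⟩
    · exact (hI.insert_indep_iff_of_notMem fun h => heG (hIG h)).2 ⟨hF heF, heI⟩
    · rw [encard_insert_of_notMem fun h => heG (hIG h), hIcard, List.length_cons]
      norm_cast

end Matroid

namespace IsChirotope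

variable {α : Type*} {φ : (Fin (n + 1) → α) → ℝ}

lemma injective_of_ne_zero (hφ : IsChirotope φ) {b : Fin (n + 1) → α} (hb : φ b ≠ 0) :
    Injective b :=
  fun i j hij => by_contra fun hne => hb (hφ.2.2.2.1 b i j hne hij)

lemma ne_zero_of_range_eq (hφ : IsChirotope φ) {b c : Fin (n + 1) → α} (hc : φ c ≠ 0)
    (hb : Injective b) (h : range b = range c) : φ b ≠ 0 := by
  have hc' := hφ.injective_of_ne_zero hc
  set σ : Equiv.Perm (Fin (n + 1)) :=
    (Equiv.ofInjective b hb).trans ((Equiv.setCongr h).trans (Equiv.ofInjective c hc').symm)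
  have hbc : b = c ∘ σ := funext fun i => by
    simpa [σ] using (Equiv.apply_ofInjective_symm hc' (Equiv.setCongr h ⟨b i, i, rfl⟩)).symm
  rw [hbc, hφ.2.2.1 c σ]
  simpa using hc

lemma cons_comp_succAbove_ne_zero (hφ : IsChirotope φ) {b : Fin (n + 1) → α} (hb : φ b ≠ 0)
    (i : Fin (n + 1)) : φ (Fin.cons (b i) (b ∘ i.succAbove)) ≠ 0 := by
  have hb' := hφ.injective_of_ne_zero hb
  refine hφ.ne_zero_of_range_eq hb ?_ ?_
  · rw [Fin.cons_injective_iff, hb'.range_comp_succAbove]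
    exact ⟨fun h => h.2 rfl, hb'.comp i.succAbove_right_injective⟩
  · rw [Fin.range_cons, hb'.range_comp_succAbove, insert_sdiff_singleton,
      insert_eq_of_mem (mem_range_self i)]

/-- The Grassmann–Plücker relation for `Fin.cons a b` and `μ` has the nonzero term
`φ b * φ (Fin.cons a μ)` at index `0`; a term of the opposite sign must occur elsewhere. -/
lemma exists_cons_ne_zero (hφ : IsChirotope φ) {b : Fin (n + 1) → α} {a : α} {μ : Fin n → α}
    (hb : φ b ≠ 0) (ha : φ (Fin.cons a μ) ≠ 0) : ∃ j, φ (Fin.cons (b j) μ) ≠ 0 := by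
  set t : Fin (n + 2) → ℝ := fun k =>
    (-1) ^ (k : ℕ) * φ (Fin.cons a b ∘ k.succAbove) * φ (Fin.cons ((Fin.cons a b : _ → α) k) μ)
  have ht0 : t 0 ≠ 0 := by simp [t, hb, ha]
  obtain ⟨k, hk0, hk⟩ : ∃ k ≠ 0, t k ≠ 0 := by
    rcases hφ.2.2.2.2 (Fin.cons a b) μ with hall | ⟨k, l, hk, hl⟩
    · exact absurd (hall 0) ht0
    · by_cases hk0 : k = 0
      · subst hk0
        exact ⟨l, fun h => by subst h; exact lt_asymm hk hl, hl.ne⟩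
      · exact ⟨k, hk0, hk.ne'⟩
  obtain ⟨j, rfl⟩ := Fin.exists_succ_eq.mpr hk0
  exact ⟨j, fun h => hk (by simp [t, h])⟩

lemma exists_exchange (hφ : IsChirotope φ) {c c' : Fin (n + 1) → α} (hc : φ c ≠ 0)
    (hc' : φ c' ≠ 0) {i : Fin (n + 1)} (hi : c i ∉ range c') :
    ∃ f ∈ range c' \ range c, ∃ b, φ b ≠ 0 ∧ range b = insert f (range c \ {c i}) := by
  obtain ⟨j, hj⟩ := hφ.exists_cons_ne_zero hc' (hφ.cons_comp_succAbove_ne_zero hc i)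
  have hrange := (hφ.injective_of_ne_zero hc).range_comp_succAbove i
  have hj' : c' j ∉ range c \ {c i} :=
    hrange ▸ (Fin.cons_injective_iff.mp (hφ.injective_of_ne_zero hj)).1
  refine ⟨c' j, ⟨mem_range_self j, fun h => hj' ⟨h, ?_⟩⟩, _, hj, by rw [Fin.range_cons, hrange]⟩
  rintro (hji : c' j = c i)
  exact hi (hji ▸ mem_range_self j)

def matroid (hφ : IsChirotope φ) : Matroid α :=
  Matroid.ofExistsFiniteIsBase univ (fun B => ∃ b, φ b ≠ 0 ∧ range b = B)
    (let ⟨b, hb⟩ := hφ.1; ⟨range b, ⟨b, hb, rfl⟩, finite_range b⟩)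
    (by
      rintro _ _ ⟨c, hc, rfl⟩ ⟨c', hc', rfl⟩ _ ⟨⟨i, rfl⟩, hi⟩
      exact hφ.exists_exchange hc hc' hi)
    (fun _ _ => subset_univ _)

instance (hφ : IsChirotope φ) : hφ.matroid.RankFinite :=
  Matroid.ofExistsFiniteIsBase_rankFinite _ _ _ _ _

@[simp] lemma matroid_E (hφ : IsChirotope φ) : hφ.matroid.E = univ := rfl

lemma isBase_matroid_iff (hφ : IsChirotope φ) {B : Set α} :
    hφ.matroid.IsBase B ↔ ∃ b, φ b ≠ 0 ∧ range b = B := Iff.rfl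

lemma ne_zero_iff_isBase (hφ : IsChirotope φ) {b : Fin (n + 1) → α} :
    φ b ≠ 0 ↔ Injective b ∧ hφ.matroid.IsBase (range b) := by
  refine ⟨fun hb => ⟨hφ.injective_of_ne_zero hb, b, hb, rfl⟩, ?_⟩
  rintro ⟨hb, c, hc, hcb⟩
  exact hφ.ne_zero_of_range_eq hc hb hcb.symm

lemma eRank_matroid (hφ : IsChirotope φ) : hφ.matroid.eRank = n + 1 := by
  obtain ⟨b, hb⟩ := hφ.1
  rw [← ((hφ.ne_zero_iff_isBase).1 hb).2.encard_eq_eRank, ← image_univ,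
    (hφ.injective_of_ne_zero hb).encard_image, encard_univ, ENat.card_eq_coe_fintype_card,
    Fintype.card_fin]
  norm_cast

lemma indep_iff_indep_matroid (hφ : IsChirotope φ) {S : Finset α} :
    Indep φ S ↔ hφ.matroid.Indep S := by
  simp [Indep, Matroid.indep_iff, isBase_matroid_iff]

lemma isFlat_iff_isFlat_matroid [DecidableEq α] (hφ : IsChirotope φ) {F : Set α} :
    IsFlat φ F ↔ hφ.matroid.IsFlat F := by
  rw [Matroid.isFlat_iff_closure_eq]
  constructor
  · intro hF
    refine subset_antisymm (fun e he => ?_) (hφ.matroid.subset_closure F (subset_univ F))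
    obtain ⟨I, hI⟩ := hφ.matroid.exists_isBasis F (subset_univ F)
    rw [← hI.closure_eq_closure, hI.indep.mem_closure_iff] at he
    rcases he with hdep | heI
    · refine hF e ⟨hI.indep.finite.toFinset, by simpa using hI.subset, ?_, ?_⟩
      · simpa [hφ.indep_iff_indep_matroid] using hI.indep
      · simpa [hφ.indep_iff_indep_matroid] using hdep.not_indep
    · exact hI.subset heI
  · rintro hF e ⟨S, hSF, hS, heS⟩
    rw [hφ.indep_iff_indep_matroid] at hS heS
    have he : e ∈ hφ.matroid.closure S := by
      rw [hS.mem_closure_iff, Matroid.dep_iff]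
      exact Or.inl ⟨by simpa using heS, subset_univ _⟩
    exact hF ▸ hφ.matroid.closure_subset_closure hSF he

lemma setOf_cons_eq_zero_eq_closure (hφ : IsChirotope φ) {e : α} {μ : Fin n → α}
    (he : φ (Fin.cons e μ) ≠ 0) : {x | φ (Fin.cons x μ) = 0} = hφ.matroid.closure (range μ) := by
  obtain ⟨heμ, hμ⟩ := Fin.cons_injective_iff.mp (hφ.injective_of_ne_zero he)
  have hbase : hφ.matroid.IsBase (insert e (range μ)) := by
    simpa [Fin.range_cons] using ((hφ.ne_zero_iff_isBase).1 he).2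
  have hindep : hφ.matroid.Indep (range μ) := hbase.indep.subset (subset_insert _ _)
  ext x
  change φ (Fin.cons x μ) = 0 ↔ _
  rw [← not_iff_not, ← ne_eq, hφ.ne_zero_iff_isBase, Fin.cons_injective_iff, Fin.range_cons]
  by_cases hx : x ∈ range μ
  · simp [hx, hφ.matroid.subset_closure _ (subset_univ _) hx]
  rw [hindep.notMem_closure_iff_of_notMem hx (mem_univ x)]
  exact ⟨fun h => h.2.indep,
    fun h => ⟨⟨hx, hμ⟩, Matroid.insert_isBase_of_insert_indep heμ hx hbase h⟩⟩

lemma isFlat_setOf_eq_zero_of_isCocircuit (hφ : IsChirotope φ) {X : α → ℝ}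
    (hX : IsCocircuit φ X) : hφ.matroid.IsFlat {e | X e = 0} := by
  obtain ⟨hX0, ε, μ, hε, hXμ⟩ := hX
  obtain ⟨e, he⟩ := Function.ne_iff.mp hX0
  have hε0 : ε ≠ 0 := by rcases hε with rfl | rfl <;> norm_num
  have hzero : {e | X e = 0} = {x | φ (Fin.cons x μ) = 0} := by
    ext x
    simp [hXμ, hε0]
  rw [hzero, hφ.setOf_cons_eq_zero_eq_closure (right_ne_zero_of_mul (hXμ e ▸ he))]
  exact Matroid.isFlat_closure _

lemma isFlat_setOf_eq_zero_of_isCovector (hφ : IsChirotope φ) {X : α → ℝ}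
    (hX : IsCovector φ X) : hφ.matroid.IsFlat {e | X e = 0} := by
  induction hX with
  | zero => simpa using hφ.matroid.ground_isFlat
  | cocirc X hX => exact hφ.isFlat_setOf_eq_zero_of_isCocircuit hX
  | comp X Y hX _ ihY =>
    rw [setOf_scomp_eq_zero]
    exact (hφ.isFlat_setOf_eq_zero_of_isCocircuit hX).inter ihY

lemma exists_isCocircuit_setOf_eq_zero_eq_closure_sdiff (hφ : IsChirotope φ) {B : Set α}
    {e : α} (hB : hφ.matroid.IsBase B) (he : e ∈ B) :
    ∃ X, IsCocircuit φ X ∧ {x | X x = 0} = hφ.matroid.closure (B \ {e}) := by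
  obtain ⟨c, hc, rfl⟩ := hB
  obtain ⟨j, rfl⟩ := he
  have hcj := hφ.cons_comp_succAbove_ne_zero hc j
  refine ⟨fun x => φ (Fin.cons x (c ∘ j.succAbove)), ⟨Function.ne_iff.mpr ⟨c j, hcj⟩,
    1, c ∘ j.succAbove, Or.inl rfl, fun x => (one_mul _).symm⟩, ?_⟩
  rw [hφ.setOf_cons_eq_zero_eq_closure hcj, (hφ.injective_of_ne_zero hc).range_comp_succAbove]

lemma exists_isCovector_setOf_eq_zero_eq (hφ : IsChirotope φ) {F : Set α}
    (hF : hφ.matroid.IsFlat F) : ∃ X, IsCovector φ X ∧ {e | X e = 0} = F := by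
  obtain ⟨I, hI⟩ := hφ.matroid.exists_isBasis F (subset_univ F)
  obtain ⟨B, hB, hIB⟩ := hI.indep.exists_isBase_superset
  choose! Y hY hYzero using fun e (he : e ∈ B) =>
    hφ.exists_isCocircuit_setOf_eq_zero_eq_closure_sdiff hB he
  obtain ⟨X, hX, hXzero⟩ :=
    exists_isCovector_setOf_eq_zero_eq_biInter (hB.finite.sdiff (t := I)) fun e he => hY e he.1
  refine ⟨X, hX, ?_⟩
  rw [hXzero, ← hF.closure, ← hI.closure_eq_closure, hB.closure_eq_ground_inter_biInter hIB,
    matroid_E, univ_inter]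
  exact iInter₂_congr fun e he => hYzero e he.1

end IsChirotope

/-- The zero set of a covector is a flat; every flat arises this way; the map is
strictly monotone; hence chains of nonzero covectors have length at most the rank. -/
theorem covector_zeroSet_flat (φ : (Fin (n + 1) → E) → ℝ) (hφ : IsChirotope φ) :
    (∀ X : E → ℝ, IsCovector φ X → IsFlat φ {e | X e = 0}) ∧
    (∀ F : Set E, IsFlat φ F → ∃ X : E → ℝ, IsCovector φ X ∧ {e | X e = 0} = F) ∧
    (∀ X Y : E → ℝ, IsCovector φ X → IsCovector φ Y → sle X Y → X ≠ Y →
      {e | Y e = 0} ⊂ {e | X e = 0}) ∧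
    (∀ l : List (E → ℝ), (∀ X ∈ l, IsCovector φ X ∧ X ≠ 0) →
      l.Chain' (fun X Y => sle X Y ∧ X ≠ Y) → l.length ≤ n + 1) := by
  refine ⟨fun X hX => hφ.isFlat_iff_isFlat_matroid.2 (hφ.isFlat_setOf_eq_zero_of_isCovector hX),
    fun F hF => hφ.exists_isCovector_setOf_eq_zero_eq (hφ.isFlat_iff_isFlat_matroid.1 hF),
    fun X Y _ _ => setOf_eq_zero_ssubset_of_sle, fun l hl hchain => ?_⟩
  have hchain₀ : (0 :: l).IsChain (fun X Y => sle X Y ∧ X ≠ Y) :=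
    List.IsChain.cons hchain fun Y hY =>
      ⟨fun _ h => absurd rfl h, (hl Y (List.mem_of_mem_head? hY)).2.symm⟩
  have hflats := List.isChain_map_of_isChain (S := (· ⊃ ·)) (fun X : E → ℝ => {e | X e = 0})
    (fun _ _ h => setOf_eq_zero_ssubset_of_sle h.1 h.2) hchain₀
  obtain ⟨I, -, hI, hIcard⟩ := hφ.matroid.exists_indep_subset_encard_eq_length (subset_univ _)
    (by simpa using fun X hX => hφ.isFlat_setOf_eq_zero_of_isCovector (hl X hX).1) hflats
  have := hIcard ▸ hI.encard_le_eRank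
  rw [hφ.eRank_matroid, List.length_map] at this
  exact_mod_cast this
end
end

section
/- For an oriented matroid M on ground set E with covector set Cov, and any finite subset E' ⊆ E, the covector set of the restriction M|_{E'} equals {X|_{E'} : X ∈ Cov}; in particular restriction gives an order-preserving surjection Cov → Cov(M|_{E'}). -/
/-!
Restriction commutes with composition, and a cocircuit of `M|E'` is the restriction of the
cocircuit of `M` given by the same `μ`, so everything reduces to showing that the restriction to
`E'` of a cocircuit `e ↦ φ(e, μ)` of `M` is a covector of `M|E'`. Induct on the number of entries
of `μ` outside `E'`. If `p = μ j ∉ E'`, contracting the other entries of `μ` leaves a rank-two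
chirotope `D` with `φ(e, μ) = ±D(e, p)`. In rank two, on the finite set `E'`, `D(·, p)` is either
`±D(·, e₁)` for a nonloop `e₁ ∈ E'` parallel to `p`, or the composition `±D(·, f) ∘ ±D(·, g)`,
where `f ∈ E'` is the element next to `p` in the cyclic order and `g ∈ E'` is not parallel to `f`.
Replacing `p` by `e₁`, `f` or `g` lowers the count.
-/

noncomputable section

variable {E : Type*} [DecidableEq E] {n : ℕ}

/-- The restriction of a chirotope to a subset of the ground set. -/
def restrictChi (φ : (Fin (n + 1) → E) → ℝ) (E' : Set E) : (Fin (n + 1) → E') → ℝ :=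
  fun b => φ fun i => (b i : E)

section SignedSets

variable {α : Type*} {φ : (Fin (n + 1) → α) → ℝ}

lemma scomp_apply_of_ne_zero {X : α → ℝ} (Y : α → ℝ) {e : α} (h : X e ≠ 0) :
    scomp X Y e = X e :=
  if_pos h

lemma scomp_apply_of_eq_zero {X : α → ℝ} (Y : α → ℝ) {e : α} (h : X e = 0) :
    scomp X Y e = Y e :=
  if_neg (not_not.mpr h)

lemma scomp_self (X : α → ℝ) : scomp X X = X := by
  funext e; simp [scomp]

lemma scomp_zero_left (Y : α → ℝ) : scomp 0 Y = Y := by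
  funext e; simp [scomp]

lemma scomp_assoc (X Y Z : α → ℝ) : scomp (scomp X Y) Z = scomp X (scomp Y Z) := by
  funext e; by_cases hX : X e = 0 <;> by_cases hY : Y e = 0 <;> simp [scomp, hX, hY]

lemma smul_scomp {c : ℝ} (hc : c ≠ 0) (X Y : α → ℝ) : c • scomp X Y = scomp (c • X) (c • Y) := by
  funext e; by_cases hX : X e = 0 <;> simp [scomp, hX, hc]

lemma IsCocircuit.smul {X : α → ℝ} {c : ℝ} (hc : c = 1 ∨ c = -1) (hX : IsCocircuit φ X) :
    IsCocircuit φ (c • X) := by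
  obtain ⟨hX0, ε, μ, hε, hXμ⟩ := hX
  have hc0 : c ≠ 0 := by rcases hc with rfl | rfl <;> norm_num
  refine ⟨smul_ne_zero hc0 hX0, c * ε, μ, ?_, fun e => by simp [hXμ, mul_assoc]⟩
  rcases hc with rfl | rfl <;> rcases hε with rfl | rfl <;> norm_num

lemma IsCovector.smul {X : α → ℝ} {c : ℝ} (hc : c = 1 ∨ c = -1) (hX : IsCovector φ X) :
    IsCovector φ (c • X) := by
  have hc0 : c ≠ 0 := by rcases hc with rfl | rfl <;> norm_num
  induction hX with
  | zero => rw [smul_zero]; exact .zero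
  | cocirc X hX => exact .cocirc _ (hX.smul hc)
  | comp X Y hX _ ih => rw [smul_scomp hc0]; exact .comp _ _ (hX.smul hc) ih

lemma IsCovector.scomp {X Y : α → ℝ} (hX : IsCovector φ X) (hY : IsCovector φ Y) :
    IsCovector φ (scomp X Y) := by
  induction hX with
  | zero => rwa [scomp_zero_left]
  | cocirc X hX => exact .comp _ _ hX hY
  | comp X W hX _ ih => rw [scomp_assoc]; exact .comp _ _ hX ih

end SignedSets

def IsSign (x : ℝ) : Prop := x = 0 ∨ x = 1 ∨ x = -1

namespace IsSign

variable {x y : ℝ}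

lemma mul (hx : IsSign x) (hy : IsSign y) : IsSign (x * y) := by
  rcases hx with rfl | rfl | rfl <;> rcases hy with rfl | rfl | rfl <;> norm_num [IsSign]

lemma neg (hx : IsSign x) : IsSign (-x) := by
  rcases hx with rfl | rfl | rfl <;> norm_num [IsSign]

lemma mul_self (hx : IsSign x) (hx0 : x ≠ 0) : x * x = 1 := by
  rcases hx with rfl | rfl | rfl <;> norm_num at *

lemma eq_neg_of_ne (hx : IsSign x) (hy : IsSign y) (hx0 : x ≠ 0) (hy0 : y ≠ 0) (hxy : x ≠ y) :
    x = -y := by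
  rcases hx with rfl | rfl | rfl <;> rcases hy with rfl | rfl | rfl <;> norm_num at *

end IsSign

def SignBalanced (x y z : ℝ) : Prop :=
  (x = 0 ∧ y = 0 ∧ z = 0) ∨ ((0 < x ∨ 0 < y ∨ 0 < z) ∧ (x < 0 ∨ y < 0 ∨ z < 0))

namespace SignBalanced

variable {x y z : ℝ}

lemma rotate (h : SignBalanced x y z) : SignBalanced y z x := by
  unfold SignBalanced at *; tauto

lemma eq_zero_of_zero_zero (h : SignBalanced 0 0 z) : z = 0 := by
  rcases h with ⟨-, -, h⟩ | ⟨hpos, hneg⟩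
  · exact h
  · simp only [lt_irrefl, false_or] at hpos hneg
    linarith

lemma eq_neg_of_right_eq_zero (h : SignBalanced x y 0) (hx : IsSign x) (hy : IsSign y) :
    x = -y := by
  rcases hx with rfl | rfl | rfl <;> rcases hy with rfl | rfl | rfl <;> norm_num [SignBalanced] at *

lemma eq_neg_of_eq (h : SignBalanced x y x) (hx : IsSign x) (hx0 : x ≠ 0) (hy : IsSign y) :
    y = -x := by
  rcases hx with rfl | rfl | rfl <;> rcases hy with rfl | rfl | rfl <;> norm_num [SignBalanced] at *

end SignBalanced

/-- A rank-two chirotope, not required to be nonzero; `signBalanced` is the Grassmann–Plücker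
relation `[bc][ad] - [ac][bd] + [ab][cd] = 0` read over signs. -/
structure IsRankTwoChirotope {α : Type*} (D : α → α → ℝ) : Prop where
  isSign : ∀ u v, IsSign (D u v)
  antisymm : ∀ u v, D v u = -D u v
  signBalanced : ∀ a b c d, SignBalanced (D b c * D a d) (-(D a c * D b d)) (D a b * D c d)

namespace IsRankTwoChirotope

variable {α : Type*} {D : α → α → ℝ}

lemma apply_self (hD : IsRankTwoChirotope D) (a : α) : D a a = 0 := by
  linarith [hD.antisymm a a]

lemma exchange (hD : IsRankTwoChirotope D) {a b c d : α} (hab : D a b ≠ 0) (hcd : D c d ≠ 0) :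
    D c a ≠ 0 ∨ D c b ≠ 0 := by
  by_contra! h
  have hbal := hD.signBalanced a b c d
  rw [hD.antisymm c b, hD.antisymm c a, h.1, h.2, neg_zero, zero_mul, zero_mul, neg_zero] at hbal
  exact mul_ne_zero hab hcd hbal.eq_zero_of_zero_zero

lemma eq_smul_of_parallel (hD : IsRankTwoChirotope D) {e₀ e₁ p w : α} (he₀ : D e₀ p ≠ 0)
    (he₁ : D e₁ p = 0) (he₁w : D e₁ w ≠ 0) :
    (D · p) = (-(D e₁ e₀ * D e₀ p)) • (D · e₁) := by
  have h₁₀ : D e₁ e₀ ≠ 0 := (hD.exchange he₀ he₁w).resolve_right (not_not.mpr he₁)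
  funext e
  have hbal := (hD.signBalanced e e₁ e₀ p).rotate.rotate
  rw [he₁, mul_zero, neg_zero] at hbal
  have h := hbal.eq_neg_of_right_eq_zero ((hD.isSign _ _).mul (hD.isSign _ _))
    ((hD.isSign _ _).mul (hD.isSign _ _))
  have hsq := (hD.isSign e₁ e₀).mul_self h₁₀
  simp only [Pi.smul_apply, smul_eq_mul]
  linear_combination D e₁ e₀ * h - D e p * hsq

/-- After reorienting `a` and `b` so that `D a p = D b p = 1`, this reads `D a b = 1`: an angular
order on the elements not parallel to `p`. -/
def Precedes (D : α → α → ℝ) (p a b : α) : Prop := D a b ≠ 0 ∧ D a b = D a p * D b p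

lemma precedes_trans (hD : IsRankTwoChirotope D) {p a b c : α} (hab : Precedes D p a b)
    (hbc : Precedes D p b c) : Precedes D p a c := by
  obtain ⟨hab0, hab⟩ := hab
  obtain ⟨hbc0, hbc⟩ := hbc
  have hap : D a p ≠ 0 := fun h => hab0 (by rw [hab, h, zero_mul])
  have hbp : D b p ≠ 0 := fun h => hbc0 (by rw [hbc, h, zero_mul])
  have hcp : D c p ≠ 0 := fun h => hbc0 (by rw [hbc, h, mul_zero])
  have hbal := hD.signBalanced a b c p
  rw [hab, hbc, show D b p * D c p * D a p = D a p * D b p * D c p by ring] at hbal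
  have h := hbal.eq_neg_of_eq ((hD.isSign _ _).mul (hD.isSign _ _) |>.mul (hD.isSign _ _))
    (mul_ne_zero (mul_ne_zero hap hbp) hcp) ((hD.isSign _ _).mul (hD.isSign _ _)).neg
  have hsq := (hD.isSign b p).mul_self hbp
  have hac : D a c = D a p * D c p := by
    linear_combination (-D b p) * h - (D a c - D a p * D c p) * hsq
  exact ⟨by rw [hac]; exact mul_ne_zero hap hcp, hac⟩

lemma exists_extreme (hD : IsRankTwoChirotope D) {S : Set α} (hS : S.Finite) {p : α}
    (hp : ∃ e ∈ S, D e p ≠ 0) :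
    ∃ f ∈ S, D f p ≠ 0 ∧ ∀ e ∈ S, D e p ≠ 0 → D e f ≠ 0 → D e p = D f p * D e f := by
  let _ : IsStrictOrder α (flip (Precedes D p)) :=
    { irrefl := fun a h => h.1 (hD.apply_self a)
      trans := fun _ _ _ h₁ h₂ => hD.precedes_trans h₂ h₁ }
  obtain ⟨⟨f, hfS, hfp⟩, -, hmax⟩ :=
    ((hS.sep fun e => D e p ≠ 0).wellFoundedOn (r := flip (Precedes D p))).has_min Set.univ
      (by obtain ⟨e, he, hep⟩ := hp; exact ⟨⟨e, he, hep⟩, trivial⟩)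
  refine ⟨f, hfS, hfp, fun e he hep hef => ?_⟩
  have hnot : ¬ D f e = D f p * D e p := fun h =>
    hmax ⟨e, he, hep⟩ trivial ⟨by rw [hD.antisymm]; exact neg_ne_zero.mpr hef, h⟩
  rw [hD.antisymm e f] at hnot
  have h := ((hD.isSign e f).neg).eq_neg_of_ne ((hD.isSign f p).mul (hD.isSign e p))
    (neg_ne_zero.mpr hef) (mul_ne_zero hfp hep) hnot
  have hsq := (hD.isSign f p).mul_self hfp
  linear_combination D f p * h - D e p * hsq

lemma restrict_eq_scomp_of_extreme (hD : IsRankTwoChirotope D) {S : Set α} {p f g : α}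
    (hfp : D f p ≠ 0) (hfg : D f g ≠ 0)
    (hext : ∀ e ∈ S, D e f ≠ 0 → D e p = D f p * D e f) :
    S.domRestrict (D · p) =
      scomp (D f p • S.domRestrict (D · f)) ((D f g * D f p) • S.domRestrict (D · g)) := by
  funext ⟨e, he⟩
  by_cases hef : D e f = 0
  · rw [scomp_apply_of_eq_zero _ (by simp [hef])]
    simp only [Set.domRestrict_apply, Pi.smul_apply, smul_eq_mul]
    have hbal := hD.signBalanced e f g p
    rw [hef, zero_mul] at hbal
    have h := hbal.eq_neg_of_right_eq_zero ((hD.isSign _ _).mul (hD.isSign _ _))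
      ((hD.isSign _ _).mul (hD.isSign _ _)).neg
    have hsq := (hD.isSign f g).mul_self hfg
    linear_combination D f g * h - D e p * hsq
  · rw [scomp_apply_of_ne_zero _ (by simp [hfp, hef])]
    exact hext e he hef

theorem exists_restrict_eq_scomp (hD : IsRankTwoChirotope D) {S : Set α} (hS : S.Finite)
    {a b : α} (ha : a ∈ S) (hb : b ∈ S) (hab : D a b ≠ 0) {p : α} (hp : ∃ e ∈ S, D e p ≠ 0) :
    ∃ f ∈ S, ∃ g ∈ S, ∃ c d : ℝ, (c = 1 ∨ c = -1) ∧ (d = 1 ∨ d = -1) ∧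
      S.domRestrict (D · p) = scomp (c • S.domRestrict (D · f)) (d • S.domRestrict (D · g)) := by
  obtain ⟨e₀, he₀, he₀p⟩ := hp
  by_cases hpar : ∃ e₁ ∈ S, D e₁ p = 0 ∧ ∃ w, D e₁ w ≠ 0
  · obtain ⟨e₁, he₁, he₁p, w, he₁w⟩ := hpar
    have hc : IsSign (-(D e₁ e₀ * D e₀ p)) := ((hD.isSign _ _).mul (hD.isSign _ _)).neg
    have hc0 : -(D e₁ e₀ * D e₀ p) ≠ 0 := neg_ne_zero.mpr (mul_ne_zero
      ((hD.exchange he₀p he₁w).resolve_right (not_not.mpr he₁p)) he₀p)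
    refine ⟨e₁, he₁, e₁, he₁, _, _, hc.resolve_left hc0, hc.resolve_left hc0, ?_⟩
    rw [scomp_self, hD.eq_smul_of_parallel he₀p he₁p he₁w]
    rfl
  · push Not at hpar
    obtain ⟨f, hf, hfp, hext⟩ := hD.exists_extreme hS ⟨e₀, he₀, he₀p⟩
    obtain ⟨g, hg, hfg⟩ : ∃ g ∈ S, D f g ≠ 0 :=
      (hD.exchange hab hfp).elim (⟨a, ha, ·⟩) (⟨b, hb, ·⟩)
    refine ⟨f, hf, g, hg, _, _, (hD.isSign f p).resolve_left hfp,
      ((hD.isSign f g).mul (hD.isSign f p)).resolve_left (mul_ne_zero hfg hfp),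
      hD.restrict_eq_scomp_of_extreme hfp hfg fun e he hef => hext e he ?_ hef⟩
    exact fun hep => hef (hpar e he hep f)

end IsRankTwoChirotope

lemma signBalanced_of_grassmannPlucker {m : ℕ} {T : Fin (m + 3) → ℝ}
    (hT : ∀ i : Fin m, T i.succ.succ.succ = 0)
    (h : (∀ k, T k = 0) ∨ ∃ k l, 0 < T k ∧ T l < 0) : SignBalanced (T 0) (T 1) (T 2) := by
  have hsupp : ∀ k, T k ≠ 0 → k = 0 ∨ k = 1 ∨ k = 2 := by
    intro k hk
    match k with
    | 0 => exact Or.inl rfl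
    | 1 => exact Or.inr (Or.inl rfl)
    | 2 => exact Or.inr (Or.inr rfl)
    | ⟨i + 3, hi⟩ => exact absurd (hT ⟨i, by omega⟩) hk
  rcases h with h | ⟨k, l, hk, hl⟩
  · exact Or.inl ⟨h 0, h 1, h 2⟩
  · refine Or.inr ⟨?_, ?_⟩
    · rcases hsupp k hk.ne' with rfl | rfl | rfl <;> simp [hk]
    · rcases hsupp l hl.ne with rfl | rfl | rfl <;> simp [hl]

lemma removeNth_succ_cons {m : ℕ} {α : Type*} (i : Fin (m + 1)) (x : α) (p : Fin (m + 1) → α) :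
    Fin.removeNth i.succ (Fin.cons x p : Fin (m + 2) → α) = Fin.cons x (Fin.removeNth i p) :=
  Fin.cons_comp_succ_succAbove x p i

namespace IsChirotope

variable {α : Type*} {φ : (Fin (n + 1) → α) → ℝ}

lemma isSign (hφ : IsChirotope φ) (b : Fin (n + 1) → α) : IsSign (φ b) :=
  hφ.2.1 b

lemma apply_eq_zero_of_eq (hφ : IsChirotope φ) {b : Fin (n + 1) → α} {i j : Fin (n + 1)}
    (hij : i ≠ j) (h : b i = b j) : φ b = 0 :=
  hφ.2.2.2.1 b i j hij h

lemma apply_insertNth (hφ : IsChirotope φ) (i : Fin (n + 1)) (v : α) (w : Fin n → α) :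
    φ (Fin.insertNth i v w) = (-1) ^ (i : ℕ) * φ (Fin.cons v w) := by
  rw [← Fin.cons_comp_cycleRange, hφ.2.2.1, Fin.sign_cycleRange]
  push_cast
  rfl

lemma apply_update (hφ : IsChirotope φ) (x : Fin (n + 1) → α) (t : Fin (n + 1)) (v : α) :
    φ (Function.update x t v) = (-1) ^ (t : ℕ) * φ (Fin.cons v (Fin.removeNth t x)) := by
  rw [← Fin.insertNth_removeNth, hφ.apply_insertNth]

lemma exchange (hφ : IsChirotope φ) {x y : Fin (n + 1) → α} (hx : φ x ≠ 0) (hy : φ y ≠ 0)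
    (t : Fin (n + 1)) : ∃ i, φ (Function.update x t (y i)) ≠ 0 := by
  by_contra! h
  have hν : ∀ v, φ (Function.update x t v) = 0 ↔ φ (Fin.cons v (Fin.removeNth t x)) = 0 :=
    fun v => by simp [hφ.apply_update]
  set X : Fin (n + 2) → α := Fin.cons (x t) y
  have hT : ∀ i : Fin (n + 1), (-1) ^ (i.succ : ℕ) * φ (X ∘ i.succ.succAbove) *
      φ (Fin.cons (X i.succ) (Fin.removeNth t x)) = 0 := fun i => by
    simp [X, (hν _).mp (h i)]
  have hT₀ : (-1) ^ ((0 : Fin (n + 2)) : ℕ) * φ (X ∘ (0 : Fin (n + 2)).succAbove) *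
      φ (Fin.cons (X 0) (Fin.removeNth t x)) ≠ 0 := by
    have := (hν (x t)).not.mp (by rwa [Function.update_eq_self])
    simpa [X, hy] using this
  -- only the term `k = 0` of this Grassmann–Plücker relation is nonzero
  rcases hφ.2.2.2.2 X (Fin.removeNth t x) with hall | ⟨k, l, hk, hl⟩
  · exact hT₀ (hall 0)
  · rcases Fin.eq_zero_or_eq_succ k with rfl | ⟨i, rfl⟩
    · rcases Fin.eq_zero_or_eq_succ l with rfl | ⟨i, rfl⟩
      · linarith
      · linarith [hT i]
    · linarith [hT i]

end IsChirotope

lemma IsChirotope.isRankTwoChirotope_contract {m : ℕ} {α : Type*}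
    {φ : (Fin (m + 1 + 1) → α) → ℝ} (hφ : IsChirotope φ) (ν : Fin m → α) :
    IsRankTwoChirotope fun u v => φ (Fin.cons u (Fin.cons v ν)) where
  isSign u v := hφ.isSign _
  antisymm u v := by
    have := hφ.apply_insertNth (Fin.succ 0) v (Fin.cons u ν)
    rw [Fin.insertNth_succ_cons, Fin.insertNth_zero'] at this
    simp only [Fin.val_succ, Fin.val_zero, zero_add, pow_one, neg_one_mul] at this
    linarith
  signBalanced a b c d := by
    -- the terms `k ≥ 3` of this Grassmann–Plücker relation have a repeated entry
    have := signBalanced_of_grassmannPlucker ?_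
      (hφ.2.2.2.2 (Fin.cons a (Fin.cons b (Fin.cons c ν))) (Fin.cons d ν))
    · rw [← Fin.succ_zero_eq_one', ← Fin.succ_one_eq_two', ← Fin.succ_zero_eq_one'] at this
      simpa only [Fin.succAbove_zero, Fin.cons_comp_succ, Fin.cons_comp_succ_succAbove,
        removeNth_succ_cons, Fin.removeNth_zero, Fin.tail_cons, Fin.cons_zero, Fin.cons_succ,
        Fin.val_zero, Fin.val_succ, pow_zero, pow_succ, one_mul, neg_one_mul, neg_mul, neg_neg,
        zero_add] using this
    · intro i
      simp only [Fin.cons_succ]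
      rw [hφ.apply_eq_zero_of_eq (b := Fin.cons (ν i) (Fin.cons d ν)) (i := 0) (j := i.succ.succ)
        (Fin.succ_ne_zero _).symm (by simp), mul_zero]

lemma IsChirotope.apply_cons_update {m : ℕ} {α : Type*} {φ : (Fin (m + 1 + 1) → α) → ℝ}
    (hφ : IsChirotope φ) (μ : Fin (m + 1) → α) (j : Fin (m + 1)) (e v : α) :
    φ (Fin.cons e (Function.update μ j v)) =
      (-1) ^ (j : ℕ) * φ (Fin.cons e (Fin.cons v (Fin.removeNth j μ))) := by
  rw [Fin.cons_update, hφ.apply_update, removeNth_succ_cons,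
    (hφ.isRankTwoChirotope_contract _).antisymm e v, Fin.val_succ, pow_succ]
  ring

lemma IsChirotope.exists_mem_contract_ne_zero {m : ℕ} {α : Type*}
    {φ : (Fin (m + 1 + 1) → α) → ℝ} (hφ : IsChirotope φ) {S : Set α}
    (hspan : ∃ b : Fin (m + 1 + 1) → S, restrictChi φ S b ≠ 0) (ν : Fin m → α) {u v : α}
    (huv : φ (Fin.cons u (Fin.cons v ν)) ≠ 0) :
    ∃ a ∈ S, ∃ b ∈ S, φ (Fin.cons a (Fin.cons b ν)) ≠ 0 := by
  obtain ⟨b, hb⟩ := hspan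
  obtain ⟨i, hi⟩ := hφ.exchange huv hb 0
  rw [Fin.update_cons_zero] at hi
  obtain ⟨k, hk⟩ := hφ.exchange hi hb (Fin.succ 0)
  rw [← Fin.cons_update, Fin.update_cons_zero] at hk
  exact ⟨b i, (b i).2, b k, (b k).2, hk⟩

section Restriction

variable {α : Type*} {φ : (Fin (n + 1) → α) → ℝ} {S : Set α}

lemma restrictChi_cons (e : S) (μ : Fin n → S) :
    restrictChi φ S (Fin.cons e μ) = φ (Fin.cons (e : α) fun i => (μ i : α)) := by
  simp only [restrictChi]
  congr 1
  exact Fin.comp_cons Subtype.val e μ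

lemma IsCocircuit.exists_lift {X' : S → ℝ} (hX' : IsCocircuit (restrictChi φ S) X') :
    ∃ X, IsCocircuit φ X ∧ S.domRestrict X = X' := by
  obtain ⟨hX'0, ε, μ, hε, hX'μ⟩ := hX'
  have hrestr : S.domRestrict (fun e => ε * φ (Fin.cons e fun i => (μ i : α))) = X' := by
    funext e; rw [hX'μ, restrictChi_cons]; rfl
  refine ⟨_, ⟨fun h0 => hX'0 ?_, ε, _, hε, fun e => rfl⟩, hrestr⟩
  rw [← hrestr, h0]; rfl

lemma IsCovector.exists_lift {X' : S → ℝ} (hX' : IsCovector (restrictChi φ S) X') :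
    ∃ X, IsCovector φ X ∧ S.domRestrict X = X' := by
  induction hX' with
  | zero => exact ⟨0, .zero, rfl⟩
  | cocirc X' hX' =>
    obtain ⟨X, hX, rfl⟩ := hX'.exists_lift
    exact ⟨X, .cocirc _ hX, rfl⟩
  | comp X' Y' hX' _ ih =>
    obtain ⟨X, hX, rfl⟩ := hX'.exists_lift
    obtain ⟨Y, hY, rfl⟩ := ih
    exact ⟨_, .comp _ _ hX hY, rfl⟩

lemma isCovector_restrict_cons_of_forall_mem {μ : Fin n → α} (hμ : ∀ i, μ i ∈ S) :
    IsCovector (restrictChi φ S) (S.domRestrict fun e => φ (Fin.cons e μ)) := by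
  by_cases h0 : S.domRestrict (fun e => φ (Fin.cons e μ)) = 0
  · rw [h0]; exact .zero
  · refine .cocirc _ ⟨h0, 1, fun i => ⟨μ i, hμ i⟩, Or.inl rfl, fun e => ?_⟩
    rw [one_mul, restrictChi_cons]
    rfl

lemma isCovector_restrict_cons_of_update (hφ : IsChirotope φ) (hS : S.Finite)
    (hspan : ∃ b : Fin (n + 1) → S, restrictChi φ S b ≠ 0) (μ : Fin n → α) (j : Fin n)
    (ih : ∀ f ∈ S, IsCovector (restrictChi φ S)
      (S.domRestrict fun e => φ (Fin.cons e (Function.update μ j f)))) :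
    IsCovector (restrictChi φ S) (S.domRestrict fun e => φ (Fin.cons e μ)) := by
  obtain ⟨m, rfl⟩ : ∃ m, n = m + 1 := ⟨_, (Nat.succ_pred_eq_of_pos j.pos).symm⟩
  set D : α → α → ℝ := fun u v => φ (Fin.cons u (Fin.cons v (Fin.removeNth j μ)))
  set s : ℝ := (-1) ^ (j : ℕ)
  have hs : s = 1 ∨ s = -1 := neg_one_pow_eq_or ℝ _
  have hupd : ∀ v, S.domRestrict (fun e => φ (Fin.cons e (Function.update μ j v))) =
      s • S.domRestrict (D · v) := fun v => by
    funext e; exact hφ.apply_cons_update μ j e v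
  have hDv : ∀ v, S.domRestrict (D · v) =
      s • S.domRestrict (fun e => φ (Fin.cons e (Function.update μ j v))) := fun v => by
    rw [hupd, smul_smul, ← pow_add, ← two_mul, pow_mul, neg_one_sq, one_pow, one_smul]
  have hμ : S.domRestrict (fun e => φ (Fin.cons e μ)) = s • S.domRestrict (D · (μ j)) := by
    simpa using hupd (μ j)
  by_cases h0 : S.domRestrict (fun e => φ (Fin.cons e μ)) = 0
  · rw [h0]; exact .zero
  obtain ⟨e₀, he₀⟩ : ∃ e : S, D e (μ j) ≠ 0 := by
    by_contra! h
    exact h0 (by rw [hμ]; funext e; simp [h e])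
  obtain ⟨a, ha, b, hb, hab⟩ := hφ.exists_mem_contract_ne_zero hspan _ he₀
  obtain ⟨f, hf, g, hg, c, d, hc, hd, heq⟩ :=
    (hφ.isRankTwoChirotope_contract _).exists_restrict_eq_scomp hS ha hb hab ⟨e₀, e₀.2, he₀⟩
  rw [hμ, heq, hDv f, hDv g]
  exact ((((ih f hf).smul hs).smul hc).scomp (((ih g hg).smul hs).smul hd)).smul hs

theorem isCovector_restrict_cons (hφ : IsChirotope φ) (hS : S.Finite)
    (hspan : ∃ b : Fin (n + 1) → S, restrictChi φ S b ≠ 0) (μ : Fin n → α) :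
    IsCovector (restrictChi φ S) (S.domRestrict fun e => φ (Fin.cons e μ)) := by
  by_cases hμ : ∀ i, μ i ∈ S
  · exact isCovector_restrict_cons_of_forall_mem hμ
  · push Not at hμ
    obtain ⟨j, hj⟩ := hμ
    exact isCovector_restrict_cons_of_update hφ hS hspan μ j fun f hf =>
      isCovector_restrict_cons hφ hS hspan (Function.update μ j f)
termination_by {i | μ i ∉ S}.ncard
decreasing_by
  refine Set.ncard_lt_ncard ((Set.ssubset_iff_of_subset fun i hi => ?_).mpr ⟨j, hj, by simp [hf]⟩)
  rcases eq_or_ne i j with rfl | hij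
  · simp [hf] at hi
  · simpa [hij] using hi

lemma IsCocircuit.isCovector_restrict (hφ : IsChirotope φ) (hS : S.Finite)
    (hspan : ∃ b : Fin (n + 1) → S, restrictChi φ S b ≠ 0) {X : α → ℝ} (hX : IsCocircuit φ X) :
    IsCovector (restrictChi φ S) (S.domRestrict X) := by
  obtain ⟨-, ε, μ, hε, hXμ⟩ := hX
  have hX : S.domRestrict X = ε • S.domRestrict fun e => φ (Fin.cons e μ) := by
    funext e; simp [hXμ]
  rw [hX]
  exact (isCovector_restrict_cons hφ hS hspan μ).smul hε

lemma IsCovector.isCovector_restrict (hφ : IsChirotope φ) (hS : S.Finite)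
    (hspan : ∃ b : Fin (n + 1) → S, restrictChi φ S b ≠ 0) {X : α → ℝ} (hX : IsCovector φ X) :
    IsCovector (restrictChi φ S) (S.domRestrict X) := by
  induction hX with
  | zero => exact .zero
  | cocirc X hX => exact hX.isCovector_restrict hφ hS hspan
  | comp X Y hX _ ih => exact (hX.isCovector_restrict hφ hS hspan).scomp ih

end Restriction

/-- The covectors of the restriction of an oriented matroid to a finite subset
`E'` of the ground set are exactly the restrictions of covectors; restriction is
order preserving. -/
theorem covectors_of_restriction (φ : (Fin (n + 1) → E) → ℝ) (hφ : IsChirotope φ)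
    (E' : Set E) (hfin : E'.Finite)
    (hspan : ∃ b : Fin (n + 1) → E', restrictChi φ E' b ≠ 0) :
    ({X' : E' → ℝ | IsCovector (restrictChi φ E') X'} =
      {X' : E' → ℝ | ∃ X : E → ℝ, IsCovector φ X ∧ ∀ e : E', X' e = X e}) ∧
    (∀ X Y : E → ℝ, IsCovector φ X → IsCovector φ Y → sle X Y →
      sle (fun e : E' => X e) (fun e : E' => Y e)) := by
  refine ⟨Set.ext fun X' => ⟨fun hX' => ?_, fun ⟨X, hX, hX'X⟩ => ?_⟩,
    fun X Y _ _ hXY e he => hXY e he⟩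
  · obtain ⟨X, hX, rfl⟩ := hX'.exists_lift
    exact ⟨X, hX, fun _ => rfl⟩
  · show IsCovector _ X'
    rw [show X' = E'.domRestrict X from funext hX'X]
    exact hX.isCovector_restrict hφ hfin hspan
end
end

section
/- Every diagonalizable (ordinary) seminorm on K^{n+1} over a non-Archimedean field lies in the tropical convex hull of the valuated cocircuits: if ||·||_{B,c} is diagonalizable with ordered basis B = (b_0,…,b_n) and weights c_0 ≥ … ≥ c_n ≥ 0, then for every f, ||f||_{B,c} = max_i ( c_i · |det(B)|^{-1} · ||f||_{μ_i} ), where μ_i = B \ {b_i} and ||f||_{μ_i} = |det(μ_i ∪ {f})|_K. -/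
noncomputable section

variable {K : Type*} [Field K] [LinearOrder K] [IsStrictOrderedRing K] {V : Type*} [AddCommGroup V] [Module K V]

theorem Matrix.det_of_update_sum_smul {R ι : Type*} [CommRing R] [Fintype ι] [DecidableEq ι]
    (b : ι → ι → R) (lam : ι → R) (i : ι) :
    (Matrix.of (Function.update b i (∑ j, lam j • b j))).det = lam i * (Matrix.of b).det :=
  (Matrix.of b).det_updateRow_sum i lam

/-- Cramer's rule, up to absolute values. -/
theorem AbsoluteValue.apply_coeff_eq_inv_mul_det_update {R S ι : Type*} [CommRing R] [Nontrivial R]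
    [Field S] [PartialOrder S] [Fintype ι] [DecidableEq ι] (abv : AbsoluteValue R S)
    (b : ι → ι → R) (lam : ι → R) (i : ι) (hb : (Matrix.of b).det ≠ 0) :
    abv (lam i) =
      (abv (Matrix.of b).det)⁻¹ * abv (Matrix.of (Function.update b i (∑ j, lam j • b j))).det := by
  rw [Matrix.det_of_update_sum_smul, map_mul, mul_comm (abv (lam i)), inv_mul_cancel_left₀ (abv.ne_zero hb)]

theorem diagonalizable_seminorm_tropical_combination_general {n : ℕ}
    (av : AbsoluteValue K ℝ)
    (b : Fin (n + 1) → Fin (n + 1) → K) (hb : (Matrix.of b).det ≠ 0)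
    (c : Fin (n + 1) → ℝ)
    (v : Fin (n + 1) → K) (lam : Fin (n + 1) → K) (hv : v = ∑ i, lam i • b i) :
    (Finset.univ.sup' Finset.univ_nonempty fun i => av (lam i) * c i) =
      Finset.univ.sup' Finset.univ_nonempty fun i =>
        c i * (av ((Matrix.of b).det))⁻¹ * av ((Matrix.of (Function.update b i v)).det) := by
  subst hv
  refine Finset.sup'_congr _ rfl fun i _ => ?_
  rw [av.apply_coeff_eq_inv_mul_det_update b lam i hb]
  ring

/-- A diagonalizable seminorm `‖·‖_{B,c}` equals the tropical combination
`max_i c_i |det B|⁻¹ ‖·‖_{μ_i}` of the valuated cocircuits `‖f‖_{μ_i} =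
|det(μ_i ∪ f)|`, where `μ_i = B \ {b_i}`. -/
theorem diagonalizable_seminorm_tropical_combination {n : ℕ}
    (av : AbsoluteValue K ℝ) (hna : IsNonarch av)
    (b : Fin (n + 1) → Fin (n + 1) → K) (hb : (Matrix.of b).det ≠ 0)
    (c : Fin (n + 1) → ℝ) (hmono : Antitone c) (hpos : ∀ i, 0 ≤ c i)
    (v : Fin (n + 1) → K) (lam : Fin (n + 1) → K) (hv : v = ∑ i, lam i • b i) :
    (Finset.univ.sup' Finset.univ_nonempty fun i => av (lam i) * c i) =
      Finset.univ.sup' Finset.univ_nonempty fun i =>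
        c i * (av ((Matrix.of b).det))⁻¹ * av ((Matrix.of (Function.update b i v)).det) :=
  diagonalizable_seminorm_tropical_combination_general av b hb c v lam hv
end
end
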